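/- arXiv:2602.14632 — 9 statements merged into one kernel-verified Lean document; each statement's English description precedes it below -/
import Mathlib

section
/- Let a < b be real numbers, k > 0, and γ ∈ (a,b). Suppose ψ ∈ L^∞(a,b) satisfies |ψ(t)| ≥ k·|t − γ| for almost every t ∈ (a,b). Then for every v ∈ L^∞(a,b) one has ‖v‖_{L^∞(a,b)} · ∫_a^b |ψ v| dλ¹ ≥ (k/8)·‖v‖_{L¹(a,b)}². -/
/-!
Split the integral of `|v|` at the ball of radius `δ` around `γ`: on the ball `|v| ≤ ‖v‖_∞`,
which contributes at most `2δ‖v‖_∞`, while off the ball `k δ |v| ≤ k |t - γ| |v| ≤ |ψ v|`.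
Hence `δ ‖v‖₁ ≤ 2δ²‖v‖_∞ + k⁻¹ ∫ |ψ v|` for every `δ > 0`, and `δ = ‖v‖₁ / (4‖v‖_∞)` gives
the claim.
-/

open MeasureTheory Set
open scoped ENNReal

theorem sq_le_eight_mul_mul_of_forall_mul_le {I M J : ℝ} (hI : 0 ≤ I) (hM : 0 ≤ M) (hJ : 0 ≤ J)
    (h : ∀ δ > 0, δ * I ≤ 2 * δ ^ 2 * M + J) : I ^ 2 ≤ 8 * M * J := by
  rcases hI.eq_or_lt with rfl | hI
  · rw [zero_pow two_ne_zero]; positivity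
  rcases hM.eq_or_lt with rfl | hM
  · have := h ((J + 1) / I) (by positivity)
    rw [div_mul_cancel₀ _ hI.ne'] at this
    linarith
  have := h (I / (4 * M)) (by positivity)
  field_simp at this
  nlinarith

theorem ofReal_mul_setLIntegral_le_essSup_add_setLIntegral_abs_sub_mul (s : Set ℝ) (γ : ℝ)
    (f : ℝ → ℝ≥0∞) {δ : ℝ} (hδ : 0 ≤ δ) :
    ENNReal.ofReal δ * ∫⁻ t in s, f t ≤
      ENNReal.ofReal (2 * δ ^ 2) * essSup f (volume.restrict s) +
        ∫⁻ t in s, ENNReal.ofReal |t - γ| * f t := by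
  set M := essSup f (volume.restrict s)
  have hball : MeasurableSet (Metric.ball γ δ) := measurableSet_ball
  have hpt : ∀ᵐ t ∂volume.restrict s, ENNReal.ofReal δ * f t ≤
      (Metric.ball γ δ).indicator (fun _ ↦ ENNReal.ofReal δ * M) t
        + ENNReal.ofReal |t - γ| * f t := by
    filter_upwards [ENNReal.ae_le_essSup f] with t ht
    by_cases htb : t ∈ Metric.ball γ δ
    · rw [indicator_of_mem htb]
      exact le_add_right (by gcongr)
    · rw [indicator_of_notMem htb, zero_add]
      rw [Metric.mem_ball, Real.dist_eq, not_lt] at htb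
      gcongr
  calc ENNReal.ofReal δ * ∫⁻ t in s, f t
      = ∫⁻ t in s, ENNReal.ofReal δ * f t :=
        (lintegral_const_mul' _ _ ENNReal.ofReal_ne_top).symm
    _ ≤ ∫⁻ t in s, ((Metric.ball γ δ).indicator (fun _ ↦ ENNReal.ofReal δ * M) t
        + ENNReal.ofReal |t - γ| * f t) := lintegral_mono_ae hpt
    _ = ENNReal.ofReal δ * M * volume (Metric.ball γ δ ∩ s) +
        ∫⁻ t in s, ENNReal.ofReal |t - γ| * f t := by
      rw [lintegral_add_left (measurable_const.indicator hball), lintegral_indicator_const hball,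
        Measure.restrict_apply hball]
    _ ≤ ENNReal.ofReal (2 * δ ^ 2) * M + ∫⁻ t in s, ENNReal.ofReal |t - γ| * f t := by
      refine add_le_add_left ?_ _
      calc ENNReal.ofReal δ * M * volume (Metric.ball γ δ ∩ s)
          ≤ ENNReal.ofReal δ * M * volume (Metric.ball γ δ) := by gcongr; exact inter_subset_left
        _ = ENNReal.ofReal (2 * δ ^ 2) * M := by
          rw [Real.volume_ball, mul_right_comm, ← ENNReal.ofReal_mul hδ]
          ring_nf

theorem setLIntegral_sq_le_essSup_mul_setLIntegral_abs_sub_mul (s : Set ℝ) (γ : ℝ)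
    {f : ℝ → ℝ≥0∞} (hf : essSup f (volume.restrict s) ≠ ⊤) :
    (∫⁻ t in s, f t) ^ 2 ≤
      8 * essSup f (volume.restrict s) * ∫⁻ t in s, ENNReal.ofReal |t - γ| * f t := by
  set I := ∫⁻ t in s, f t
  set M := essSup f (volume.restrict s)
  set J := ∫⁻ t in s, ENNReal.ofReal |t - γ| * f t
  have hsplit (δ : ℝ) (hδ : 0 ≤ δ) :=
    ofReal_mul_setLIntegral_le_essSup_add_setLIntegral_abs_sub_mul s γ f hδ
  by_cases hM0 : M = 0
  · have hI : I = 0 := by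
      rw [← lintegral_zero]
      exact lintegral_congr_ae (ENNReal.essSup_eq_zero_iff.mp hM0)
    simp [hI]
  by_cases hJ : J = ⊤
  · simp [hJ, hM0]
  have hI : I ≠ ⊤ := by
    have := hsplit 1 zero_le_one
    simp only [ENNReal.ofReal_one, one_mul] at this
    exact ne_top_of_le_ne_top (by finiteness) this
  have hreal := sq_le_eight_mul_mul_of_forall_mul_le (I := I.toReal) (M := M.toReal)
    (J := J.toReal) ENNReal.toReal_nonneg ENNReal.toReal_nonneg ENNReal.toReal_nonneg
    fun δ hδ ↦ by
      have := ENNReal.toReal_mono (by finiteness) (hsplit δ hδ.le)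
      rwa [ENNReal.toReal_add (by finiteness) hJ, ENNReal.toReal_mul, ENNReal.toReal_mul,
        ENNReal.toReal_ofReal hδ.le, ENNReal.toReal_ofReal (by positivity)] at this
  rw [← ENNReal.ofReal_toReal hI, ← ENNReal.ofReal_toReal hf, ← ENNReal.ofReal_toReal hJ,
    ← ENNReal.ofReal_pow ENNReal.toReal_nonneg, ← ENNReal.ofReal_ofNat 8,
    ← ENNReal.ofReal_mul (by norm_num), ← ENNReal.ofReal_mul (by positivity)]
  exact ENNReal.ofReal_le_ofReal hreal

theorem stmt0_general (a b k γ : ℝ) (hk : 0 < k)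
    (ψ v : ℝ → ℝ)
    (hψlow : ∀ᵐ t ∂(volume.restrict (Set.Ioo a b)), k * |t - γ| ≤ |ψ t|)
    (hv : MemLp v ⊤ (volume.restrict (Set.Ioo a b))) :
    ENNReal.ofReal (k / 8) * (eLpNorm v 1 (volume.restrict (Set.Ioo a b))) ^ 2
      ≤ eLpNorm v ⊤ (volume.restrict (Set.Ioo a b))
        * ∫⁻ t in Set.Ioo a b, ENNReal.ofReal |ψ t * v t| := by
  rw [eLpNorm_one_eq_lintegral_enorm, eLpNorm_exponent_top, eLpNormEssSup_eq_essSup_enorm]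
  have hv_bdd : essSup (‖v ·‖ₑ) (volume.restrict (Ioo a b)) ≠ ⊤ := by
    rw [← eLpNormEssSup_eq_essSup_enorm, ← eLpNorm_exponent_top]
    exact hv.eLpNorm_ne_top
  have hweight : ∀ᵐ t ∂(volume.restrict (Set.Ioo a b)),
      ENNReal.ofReal k * (ENNReal.ofReal |t - γ| * ‖v t‖ₑ) ≤ ENNReal.ofReal |ψ t * v t| := by
    filter_upwards [hψlow] with t ht
    rw [Real.enorm_eq_ofReal_abs, ← ENNReal.ofReal_mul (abs_nonneg _),
      ← ENNReal.ofReal_mul hk.le, abs_mul, ← mul_assoc]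
    gcongr
  calc ENNReal.ofReal (k / 8) * (∫⁻ t in Ioo a b, ‖v t‖ₑ) ^ 2
      ≤ ENNReal.ofReal (k / 8) * (8 * essSup (‖v ·‖ₑ) (volume.restrict (Ioo a b)) *
          ∫⁻ t in Ioo a b, ENNReal.ofReal |t - γ| * ‖v t‖ₑ) := by
        gcongr
        exact setLIntegral_sq_le_essSup_mul_setLIntegral_abs_sub_mul _ γ hv_bdd
    _ = essSup (‖v ·‖ₑ) (volume.restrict (Ioo a b)) *
          ∫⁻ t in Ioo a b, ENNReal.ofReal k * (ENNReal.ofReal |t - γ| * ‖v t‖ₑ) := by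
        rw [lintegral_const_mul' _ _ ENNReal.ofReal_ne_top, ← ENNReal.ofReal_ofNat 8,
          ← mul_assoc, ← mul_assoc, ← ENNReal.ofReal_mul (by positivity),
          div_mul_cancel₀ _ (by norm_num)]
        ring
    _ ≤ essSup (‖v ·‖ₑ) (volume.restrict (Ioo a b)) *
          ∫⁻ t in Ioo a b, ENNReal.ofReal |ψ t * v t| := by
        exact mul_le_mul_right (lintegral_mono_ae hweight) _

/-- Let `a < b`, `k > 0`, `γ ∈ (a,b)`. Suppose `ψ ∈ L^∞(a,b)` satisfies
`|ψ t| ≥ k|t − γ|` for a.e. `t ∈ (a,b)`. Then for every `v ∈ L^∞(a,b)`,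
`‖v‖_{L^∞} · ∫_a^b |ψ v| ≥ (k/8) ‖v‖_{L¹}²`. -/
theorem stmt0 (a b k γ : ℝ) (hab : a < b) (hk : 0 < k) (hγ : γ ∈ Set.Ioo a b)
    (ψ v : ℝ → ℝ)
    (hψ : MemLp ψ ⊤ (volume.restrict (Set.Ioo a b)))
    (hψlow : ∀ᵐ t ∂(volume.restrict (Set.Ioo a b)), k * |t - γ| ≤ |ψ t|)
    (hv : MemLp v ⊤ (volume.restrict (Set.Ioo a b))) :
    ENNReal.ofReal (k / 8) * (eLpNorm v 1 (volume.restrict (Set.Ioo a b))) ^ 2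
      ≤ eLpNorm v ⊤ (volume.restrict (Set.Ioo a b))
        * ∫⁻ t in Set.Ioo a b, ENNReal.ofReal |ψ t * v t| :=
  stmt0_general a b k γ hk ψ v hψlow hv
end

section
/- Let d ∈ ℕ, α > 0, p ∈ (1, d/α], and let p' = p/(p−1) be the conjugate exponent. Let L > 0, let T : ℝ^d → ℝ^d be Lipschitz continuous with constant L, and let μ be a Radon measure on ℝ^d. Then ∫_{ℝ^d} ∫_0^1 ( μ(B_r(x)) / r^{d−αp} )^{p'−1} (1/r) dλ¹(r) dμ(x) ≤ L^{(d−αp)(p'−1)} · ∫_{ℝ^d} ∫_0^L ( (T_#μ)(B_s(x)) / s^{d−αp} )^{p'−1} (1/s) dλ¹(s) d(T_#μ)(x), where both sides are interpreted as integrals of nonnegative measurable functions with values in [0,∞]. -/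
open MeasureTheory Metric Set
open scoped ENNReal NNReal

/-!
A `K`-Lipschitz map sends `closedBall x r` into `closedBall (T x) (K * r)`, so
`μ (closedBall x r) ≤ T_#μ (closedBall (T x) (K * r))`. Substituting `s = K * r` in the radial
integral turns `r ^ (d - α p)` into `K ^ (-(d - α p)) * s ^ (d - α p)` and `dr / r` into `ds / s`,
which produces the factor `K ^ ((d - α p) (p' - 1))`; finally, integrating a function of `T x`
against `μ` is integrating it against `T_#μ`.
-/

noncomputable def wolffIntegrand {X : Type*} [PseudoMetricSpace X] [MeasurableSpace X]
    (μ : Measure X) (β q : ℝ) (x : X) (r : ℝ) : ℝ≥0∞ :=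
  (μ (closedBall x r) / ENNReal.ofReal (r ^ β)) ^ q * ENNReal.ofReal (1 / r)

theorem setLIntegral_Ioo_comp_const_mul {c : ℝ} (hc : 0 < c) (a : ℝ) (G : ℝ → ℝ≥0∞) :
    ∫⁻ r in Ioo 0 a, G (c * r) = ENNReal.ofReal c⁻¹ * ∫⁻ s in Ioo 0 (c * a), G s := by
  have he : MeasurableEmbedding (c * ·) := measurableEmbedding_mulLeft₀ hc.ne'
  have hpre : (c * ·) ⁻¹' Ioo 0 (c * a) = Ioo 0 a := by
    rw [preimage_const_mul_Ioo₀ _ _ hc, zero_div, mul_div_cancel_left₀ _ hc.ne']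
  rw [← he.lintegral_map, ← hpre, ← Measure.restrict_map he.measurable measurableSet_Ioo,
    Real.map_volume_mul_left hc.ne', Measure.restrict_smul, lintegral_smul_measure,
    abs_of_pos (inv_pos.2 hc), smul_eq_mul]

section

variable {X Y : Type*} [PseudoMetricSpace X] [MeasurableSpace X] [PseudoMetricSpace Y]
  [MeasurableSpace Y]

theorem LipschitzWith.measure_closedBall_le_map [OpensMeasurableSpace X] [BorelSpace Y]
    {K : ℝ≥0} {T : X → Y} (hT : LipschitzWith K T) (μ : Measure X) (x : X) (r : ℝ) :
    μ (closedBall x r) ≤ μ.map T (closedBall (T x) (K * r)) :=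
  (measure_mono (hT.mapsTo_closedBall x r)).trans
    (Measure.le_map_apply hT.continuous.aemeasurable _)

theorem wolffIntegrand_eq_mul_scale (ν : Measure Y) (β : ℝ) {q : ℝ} (hq : 0 ≤ q) (y : Y)
    {c r : ℝ} (hc : 0 < c) (hr : 0 < r) :
    (ν (closedBall y (c * r)) / ENNReal.ofReal (r ^ β)) ^ q * ENNReal.ofReal (1 / r)
      = ENNReal.ofReal (c ^ (β * q)) * ENNReal.ofReal c * wolffIntegrand ν β q y (c * r) := by
  have hcβ : 0 < c ^ β := Real.rpow_pos_of_pos hc β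
  have hratio : ν (closedBall y (c * r)) / ENNReal.ofReal (r ^ β)
      = ENNReal.ofReal (c ^ β) * (ν (closedBall y (c * r)) / ENNReal.ofReal ((c * r) ^ β)) := by
    rw [Real.mul_rpow hc.le hr.le, ENNReal.ofReal_mul hcβ.le, ← mul_div_assoc,
      ENNReal.mul_div_mul_left _ _ (ENNReal.ofReal_pos.2 hcβ).ne' ENNReal.ofReal_ne_top]
  have hinv : ENNReal.ofReal (1 / r) = ENNReal.ofReal c * ENNReal.ofReal (1 / (c * r)) := by
    rw [← ENNReal.ofReal_mul hc.le]
    field_simp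
  rw [hratio, hinv, ENNReal.mul_rpow_of_nonneg _ _ hq, ENNReal.ofReal_rpow_of_pos hcβ,
    ← Real.rpow_mul hc.le, wolffIntegrand]
  ring

theorem LipschitzWith.wolffIntegrand_le_map [OpensMeasurableSpace X] [BorelSpace Y] {K : ℝ≥0}
    {T : X → Y} (hT : LipschitzWith K T) (hK : 0 < K) (μ : Measure X) (β : ℝ) {q : ℝ}
    (hq : 0 ≤ q) (x : X) {r : ℝ} (hr : 0 < r) :
    wolffIntegrand μ β q x r
      ≤ ENNReal.ofReal (K ^ (β * q)) * ENNReal.ofReal K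
          * wolffIntegrand (μ.map T) β q (T x) (K * r) :=
  calc wolffIntegrand μ β q x r
      ≤ (μ.map T (closedBall (T x) (K * r)) / ENNReal.ofReal (r ^ β)) ^ q
          * ENNReal.ofReal (1 / r) := by
        unfold wolffIntegrand
        gcongr
        exact hT.measure_closedBall_le_map μ x r
    _ = _ := wolffIntegrand_eq_mul_scale _ β hq (T x) hK hr

theorem LipschitzWith.setLIntegral_wolffIntegrand_le_map [OpensMeasurableSpace X] [BorelSpace Y]
    {K : ℝ≥0} {T : X → Y} (hT : LipschitzWith K T) (hK : 0 < K) (μ : Measure X) (β : ℝ)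
    {q : ℝ} (hq : 0 ≤ q) (x : X) (a : ℝ) :
    ∫⁻ r in Ioo 0 a, wolffIntegrand μ β q x r
      ≤ ENNReal.ofReal (K ^ (β * q))
          * ∫⁻ s in Ioo 0 (K * a), wolffIntegrand (μ.map T) β q (T x) s :=
  calc ∫⁻ r in Ioo 0 a, wolffIntegrand μ β q x r
      ≤ ∫⁻ r in Ioo 0 a, ENNReal.ofReal (K ^ (β * q)) * ENNReal.ofReal K
          * wolffIntegrand (μ.map T) β q (T x) (K * r) :=
        setLIntegral_mono' measurableSet_Ioo fun r hr => hT.wolffIntegrand_le_map hK μ β hq x hr.1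
    _ = ENNReal.ofReal (K ^ (β * q)) * ENNReal.ofReal K
          * ∫⁻ r in Ioo 0 a, wolffIntegrand (μ.map T) β q (T x) (K * r) :=
        lintegral_const_mul' _ _ (ENNReal.mul_ne_top ENNReal.ofReal_ne_top ENNReal.ofReal_ne_top)
    _ = _ := by
        rw [setLIntegral_Ioo_comp_const_mul (NNReal.coe_pos.2 hK) a
            (wolffIntegrand (μ.map T) β q (T x)), mul_assoc, ← mul_assoc (ENNReal.ofReal K),
          ← ENNReal.ofReal_mul (NNReal.coe_nonneg K), mul_inv_cancel₀ (NNReal.coe_pos.2 hK).ne',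
          ENNReal.ofReal_one, one_mul]

end

section

variable {Y : Type*} [PseudoMetricSpace Y] [MeasurableSpace Y] [OpensMeasurableSpace Y]
  [SecondCountableTopology Y] (ν : Measure Y) [SFinite ν]

theorem measurable_measure_closedBall_uncurry :
    Measurable fun p : Y × ℝ => ν (closedBall p.1 p.2) :=
  measurable_measure_prodMk_left (s := {p : (Y × ℝ) × Y | dist p.2 p.1.1 ≤ p.1.2})
    (measurableSet_le (by fun_prop) (by fun_prop))

theorem measurable_setLIntegral_wolffIntegrand (β q : ℝ) (s : Set ℝ) :
    Measurable fun y => ∫⁻ r in s, wolffIntegrand ν β q y r :=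
  Measurable.lintegral_prod_right' (f := Function.uncurry (wolffIntegrand ν β q)) <|
    (((measurable_measure_closedBall_uncurry ν).div
      (measurable_snd.pow_const β).ennreal_ofReal).pow_const q).mul
      (measurable_snd.const_div 1).ennreal_ofReal

end

theorem stmt1_general (d : ℕ) (α p p' L : ℝ) (hp : 1 < p)
    (hp' : p' = p / (p - 1)) (hL : 0 < L)
    (T : EuclideanSpace ℝ (Fin d) → EuclideanSpace ℝ (Fin d))
    (hT : LipschitzWith L.toNNReal T)
    (μ : Measure (EuclideanSpace ℝ (Fin d))) [IsFiniteMeasureOnCompacts μ] :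
    (∫⁻ x, ∫⁻ r in Set.Ioo (0 : ℝ) 1,
        (μ (Metric.closedBall x r) / ENNReal.ofReal (r ^ ((d : ℝ) - α * p))) ^ (p' - 1)
          * ENNReal.ofReal (1 / r) ∂volume ∂μ)
      ≤ ENNReal.ofReal (L ^ (((d : ℝ) - α * p) * (p' - 1)))
        * ∫⁻ x, ∫⁻ s in Set.Ioo (0 : ℝ) L,
            ((μ.map T) (Metric.closedBall x s) / ENNReal.ofReal (s ^ ((d : ℝ) - α * p)))
                ^ (p' - 1)
              * ENNReal.ofReal (1 / s) ∂volume ∂(μ.map T) := by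
  obtain ⟨K, rfl⟩ : ∃ K : ℝ≥0, (K : ℝ) = L := ⟨L.toNNReal, Real.coe_toNNReal L hL.le⟩
  rw [Real.toNNReal_coe] at hT
  have hq : 0 ≤ p' - 1 := by
    rw [hp', div_sub_one (by linarith : p - 1 ≠ 0), sub_sub_cancel]
    exact div_nonneg zero_le_one (by linarith)
  show ∫⁻ x, (∫⁻ r in Ioo 0 1, wolffIntegrand μ (d - α * p) (p' - 1) x r) ∂μ
    ≤ _ * ∫⁻ y, (∫⁻ s in Ioo 0 (K : ℝ), wolffIntegrand (μ.map T) (d - α * p) (p' - 1) y s) ∂μ.map T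
  have hmeas := measurable_setLIntegral_wolffIntegrand (μ.map T) (d - α * p) (p' - 1) (Ioo 0 K)
  rw [lintegral_map hmeas hT.continuous.measurable,
    ← lintegral_const_mul' _ _ ENNReal.ofReal_ne_top]
  refine lintegral_mono fun x => ?_
  simpa only [mul_one] using
    hT.setLIntegral_wolffIntegrand_le_map (NNReal.coe_pos.1 hL) μ _ hq x 1

/-- Wolff-energy comparison for a pushforward measure under a
Lipschitz map `T` with constant `L`. -/
theorem stmt1 (d : ℕ) (α p p' L : ℝ) (hα : 0 < α) (hp : 1 < p) (hpd : p ≤ d / α)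
    (hp' : p' = p / (p - 1)) (hL : 0 < L)
    (T : EuclideanSpace ℝ (Fin d) → EuclideanSpace ℝ (Fin d))
    (hT : LipschitzWith L.toNNReal T)
    (μ : Measure (EuclideanSpace ℝ (Fin d))) [IsFiniteMeasureOnCompacts μ] :
    (∫⁻ x, ∫⁻ r in Set.Ioo (0 : ℝ) 1,
        (μ (Metric.closedBall x r) / ENNReal.ofReal (r ^ ((d : ℝ) - α * p))) ^ (p' - 1)
          * ENNReal.ofReal (1 / r) ∂volume ∂μ)
      ≤ ENNReal.ofReal (L ^ (((d : ℝ) - α * p) * (p' - 1)))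
        * ∫⁻ x, ∫⁻ s in Set.Ioo (0 : ℝ) L,
            ((μ.map T) (Metric.closedBall x s) / ENNReal.ofReal (s ^ ((d : ℝ) - α * p)))
                ^ (p' - 1)
              * ENNReal.ofReal (1 / s) ∂volume ∂(μ.map T) :=
  stmt1_general d α p p' L hp hp' hL T hT μ
end

section
/- Let d ∈ ℕ, p' ∈ (1,∞), L > 0, and ε > 0. Let ν be a Radon measure on ℝ^d and let g : ℝ^d → [0,∞] be Borel measurable with g(−x) = g(x) for all x ∈ ℝ^d and g(x) ≥ ε whenever |x| ≤ 2L. Then ∫_{ℝ^d} ((g ⋆ ν)(y))^{p'} dλ^d(y) ≥ ε^{p'} · L^d · λ^d(B_1(0)) · ∫_{ℝ^d} ν(B_L(x))^{p'−1} dν(x). -/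
/-!
Write `Φ = g ⋆ ν`. By Tonelli, `∫ Φ^{p'} = ∫ Φ^{p'-1} (g ⋆ ν) = ∫∫ Φ(y)^{p'-1} g(y - z) dy dν(z)`.
For `y, w ∈ B_L(z)` we have `|y - w| ≤ 2L`, so on `B_L(z)` both `g(y - z) ≥ ε` and
`Φ(y) ≥ ε ν(B_L(z))`; restricting the inner integral to `B_L(z)`, whose volume is
`L^d λ^d(B_1(0))`, gives the bound.
-/

open MeasureTheory Metric Set Function
open scoped ENNReal

theorem ENNReal.rpow_sub_one_mul_self (x : ℝ≥0∞) {p : ℝ} (hp : 1 ≤ p) :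
    x ^ (p - 1) * x = x ^ p := by
  conv_rhs => rw [← sub_add_cancel p 1]
  rw [ENNReal.rpow_add_of_nonneg _ _ (sub_nonneg.2 hp) zero_le_one, ENNReal.rpow_one]

theorem lintegral_rpow_lintegral_eq_lintegral_lintegral {α β : Type*} [MeasurableSpace α]
    [MeasurableSpace β] {μ : Measure α} {ν : Measure β} [SFinite μ] [SFinite ν]
    {k : α → β → ℝ≥0∞} (hk : Measurable (uncurry k)) {p : ℝ} (hp : 1 ≤ p) :
    ∫⁻ y, (∫⁻ z, k y z ∂ν) ^ p ∂μ
      = ∫⁻ z, ∫⁻ y, (∫⁻ w, k y w ∂ν) ^ (p - 1) * k y z ∂μ ∂ν := by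
  have hΦ : Measurable fun y => ∫⁻ w, k y w ∂ν := hk.lintegral_prod_right
  rw [← lintegral_lintegral_swap ((hΦ.comp measurable_fst).pow_const _ |>.mul hk).aemeasurable]
  refine lintegral_congr fun y => ?_
  rw [lintegral_const_mul _ hk.of_uncurry_left, ENNReal.rpow_sub_one_mul_self _ hp]

section ClosedBall

variable {E : Type*} [SeminormedAddCommGroup E] [MeasurableSpace E] [OpensMeasurableSpace E]
  {g : E → ℝ≥0∞} {c : ℝ≥0∞} {L : ℝ}

theorem mul_measure_closedBall_le_lintegral_sub (ν : Measure E)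
    (hge : ∀ x, ‖x‖ ≤ 2 * L → c ≤ g x) {y z : E} (hy : y ∈ closedBall z L) :
    c * ν (closedBall z L) ≤ ∫⁻ w, g (y - w) ∂ν :=
  calc c * ν (closedBall z L) = ∫⁻ _ in closedBall z L, c ∂ν := by
        rw [setLIntegral_const, mul_comm]
    _ ≤ ∫⁻ w in closedBall z L, g (y - w) ∂ν := by
        refine setLIntegral_mono' measurableSet_closedBall fun w hw => hge _ ?_
        rw [← dist_eq_norm, two_mul]
        exact (dist_triangle_right y w z).trans (add_le_add hy hw)
    _ ≤ ∫⁻ w, g (y - w) ∂ν := setLIntegral_le_lintegral _ _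

theorem rpow_mul_measure_closedBall_le_lintegral (μ ν : Measure E)
    (hge : ∀ x, ‖x‖ ≤ 2 * L → c ≤ g x) {p : ℝ} (hp : 1 ≤ p) (z : E) :
    c ^ p * ν (closedBall z L) ^ (p - 1) * μ (closedBall z L)
      ≤ ∫⁻ y, (∫⁻ w, g (y - w) ∂ν) ^ (p - 1) * g (y - z) ∂μ :=
  calc c ^ p * ν (closedBall z L) ^ (p - 1) * μ (closedBall z L)
        = ∫⁻ _ in closedBall z L, (c * ν (closedBall z L)) ^ (p - 1) * c ∂μ := by
        rw [setLIntegral_const, ENNReal.mul_rpow_of_nonneg _ _ (sub_nonneg.2 hp),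
          ← ENNReal.rpow_sub_one_mul_self c hp]
        ring
    _ ≤ ∫⁻ y in closedBall z L, (∫⁻ w, g (y - w) ∂ν) ^ (p - 1) * g (y - z) ∂μ := by
        refine setLIntegral_mono' measurableSet_closedBall fun y hy => ?_
        gcongr
        · exact mul_measure_closedBall_le_lintegral_sub ν hge hy
        · refine hge _ ?_
          rw [← dist_eq_norm]
          linarith [mem_closedBall.1 hy, dist_nonneg (x := y) (y := z)]
    _ ≤ _ := setLIntegral_le_lintegral _ _

end ClosedBall

theorem stmt2_general (d : ℕ) (p' L ε : ℝ) (hp'1 : 1 < p')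
    (hL : 0 < L) (hε : 0 < ε)
    (ν : Measure (EuclideanSpace ℝ (Fin d))) [IsFiniteMeasureOnCompacts ν]
    (g : EuclideanSpace ℝ (Fin d) → ℝ≥0∞) (hg : Measurable g)
    (hge : ∀ x : EuclideanSpace ℝ (Fin d), ‖x‖ ≤ 2 * L → ENNReal.ofReal ε ≤ g x) :
    ENNReal.ofReal (ε ^ p') * ENNReal.ofReal (L ^ d)
        * volume (Metric.closedBall (0 : EuclideanSpace ℝ (Fin d)) 1)
        * ∫⁻ x, (ν (Metric.closedBall x L)) ^ (p' - 1) ∂ν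
      ≤ ∫⁻ y, (∫⁻ z, g (y - z) ∂ν) ^ p' ∂volume := by
  rw [lintegral_rpow_lintegral_eq_lintegral_lintegral (k := fun y z => g (y - z))
    (hg.comp measurable_sub) hp'1.le]
  refine (lintegral_const_mul_le _ _).trans (lintegral_mono fun z => ?_)
  refine le_of_eq_of_le ?_ (rpow_mul_measure_closedBall_le_lintegral volume ν hge hp'1.le z)
  rw [Measure.addHaar_closedBall' volume z hL.le, finrank_euclideanSpace_fin,
    ← ENNReal.ofReal_rpow_of_pos hε]
  ring

/-- Lower bound for the `p'`-energy of the convolution `g ⋆ ν` of a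
symmetric kernel `g` (bounded below by `ε` on the ball of radius `2L`) with a Radon
measure `ν`. -/
theorem stmt2 (d : ℕ) (p' L ε : ℝ) (hp'1 : 1 < p')
    (hL : 0 < L) (hε : 0 < ε)
    (ν : Measure (EuclideanSpace ℝ (Fin d))) [IsFiniteMeasureOnCompacts ν]
    (g : EuclideanSpace ℝ (Fin d) → ℝ≥0∞) (hg : Measurable g)
    (hsymm : ∀ x, g (-x) = g x)
    (hge : ∀ x : EuclideanSpace ℝ (Fin d), ‖x‖ ≤ 2 * L → ENNReal.ofReal ε ≤ g x) :
    ENNReal.ofReal (ε ^ p') * ENNReal.ofReal (L ^ d)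
        * volume (Metric.closedBall (0 : EuclideanSpace ℝ (Fin d)) 1)
        * ∫⁻ x, (ν (Metric.closedBall x L)) ^ (p' - 1) ∂ν
      ≤ ∫⁻ y, (∫⁻ z, g (y - z) ∂ν) ^ p' ∂volume :=
  stmt2_general d p' L ε hp'1 hL hε ν g hg hge
end

section
/- Let d ∈ ℕ and let g : ℝ^d → [0,∞] be Borel measurable with g(−x) = g(x) for all x ∈ ℝ^d. Define (g ⋆ g)(z) := ∫_{ℝ^d} g(z − w) g(w) dλ^d(w) and assume there is a nonincreasing function f : [0,∞) → [0,∞] with (g ⋆ g)(z) = f(|z|) for all z ∈ ℝ^d. Let T : ℝ^d → ℝ^d be Lipschitz continuous with constant 1 and let μ be a Radon measure on ℝ^d. Then ∫_{ℝ^d} ((g ⋆ μ)(x))² dλ^d(x) ≤ ∫_{ℝ^d} ((g ⋆ (T_#μ))(x))² dλ^d(x), where both sides are interpreted as integrals with values in [0,∞]. -/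
open MeasureTheory Metric Set
open scoped ENNReal

/-!
Expanding the square and applying Tonelli, the energy `∫ (g ⋆ ν)²` of a measure `ν`
equals `∬ (g ⋆ g)(y - y') dν(y) dν(y')`: the symmetry of `g` and the translation invariance
of Lebesgue measure turn `∫ g (x - y) g (x - y') dx` into `(g ⋆ g)(y - y')`. For `ν = T_#μ`
this is `∬ (g ⋆ g)(T y - T y') dμ dμ`, and since `T` shortens distances while `g ⋆ g` is a
nonincreasing function of the distance, the integrand only grows.
-/

section SelfConvolution

variable {G : Type*} [MeasurableSpace G] [AddCommGroup G] {g : G → ℝ≥0∞} {μ : Measure G}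

theorem measurable_lintegral_comp_sub_mul [MeasurableSub₂ G] [SFinite μ] (hg : Measurable g) :
    Measurable fun z => ∫⁻ w, g (z - w) * g w ∂μ :=
  ((hg.comp (measurable_fst.sub measurable_snd)).mul
    (hg.comp measurable_snd)).lintegral_prod_right'

theorem lintegral_comp_sub_mul_comp_sub [MeasurableAdd G] [μ.IsAddRightInvariant]
    (hsymm : ∀ x, g (-x) = g x) (y y' : G) :
    ∫⁻ x, g (x - y) * g (x - y') ∂μ = ∫⁻ w, g (y - y' - w) * g w ∂μ := by
  rw [← lintegral_add_right_eq_self _ y']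
  congr 1 with x
  rw [show x + y' - y = -(y - y' - x) by abel, add_sub_cancel_right, hsymm]

theorem lintegral_sq_lintegral_comp_sub [MeasurableAdd G] [MeasurableSub₂ G] [SFinite μ]
    [μ.IsAddRightInvariant] (hg : Measurable g) (hsymm : ∀ x, g (-x) = g x)
    (ν : Measure G) [SFinite ν] :
    ∫⁻ x, (∫⁻ y, g (x - y) ∂ν) ^ 2 ∂μ
      = ∫⁻ y, ∫⁻ y', ∫⁻ w, g (y - y' - w) * g w ∂μ ∂ν ∂ν := by
  have hgx : ∀ x, Measurable fun y => g (x - y) := fun x =>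
    hg.comp (measurable_const.sub measurable_id)
  calc ∫⁻ x, (∫⁻ y, g (x - y) ∂ν) ^ 2 ∂μ
      = ∫⁻ x, ∫⁻ p, g (x - p.1) * g (x - p.2) ∂ν.prod ν ∂μ := by
        congr 1 with x
        rw [sq, lintegral_prod_mul (hgx x).aemeasurable (hgx x).aemeasurable]
    _ = ∫⁻ p, ∫⁻ x, g (x - p.1) * g (x - p.2) ∂μ ∂ν.prod ν :=
        lintegral_lintegral_swap ((hg.comp (measurable_fst.sub measurable_snd.fst)).mul
          (hg.comp (measurable_fst.sub measurable_snd.snd))).aemeasurable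
    _ = ∫⁻ p, ∫⁻ w, g (p.1 - p.2 - w) * g w ∂μ ∂ν.prod ν := by
        simp_rw [lintegral_comp_sub_mul_comp_sub hsymm]
    _ = ∫⁻ y, ∫⁻ y', ∫⁻ w, g (y - y' - w) * g w ∂μ ∂ν ∂ν :=
        lintegral_prod _ ((measurable_lintegral_comp_sub_mul hg).comp
          (measurable_fst.sub measurable_snd)).aemeasurable

end SelfConvolution

theorem lintegral_lintegral_comp_sub_le_map {G : Type*} [MeasurableSpace G] [AddCommGroup G]
    [MeasurableSub₂ G] {F : G → ℝ≥0∞} (hF : Measurable F) {T : G → G} (hT : Measurable T)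
    (hle : ∀ y y', F (y - y') ≤ F (T y - T y')) (μ : Measure G) [SFinite μ] :
    ∫⁻ y, ∫⁻ y', F (y - y') ∂μ ∂μ ≤ ∫⁻ y, ∫⁻ y', F (y - y') ∂μ.map T ∂μ.map T := by
  rw [lintegral_map (f := fun y => ∫⁻ y', F (y - y') ∂μ.map T)
    (hF.comp (measurable_fst.sub measurable_snd)).lintegral_prod_right' hT]
  exact lintegral_mono fun y => (lintegral_mono fun y' => hle y y').trans_eq
    (lintegral_map (hF.comp (measurable_const.sub measurable_id)) hT).symm

/-- If the self-convolution `g ⋆ g` of a symmetric kernel `g` is a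
nonincreasing function of the norm and `T` is `1`-Lipschitz, then the `L²`-energy of
`g ⋆ μ` is bounded by that of `g ⋆ (T_#μ)` for every Radon measure `μ`. -/
theorem stmt5 (d : ℕ) (g : EuclideanSpace ℝ (Fin d) → ℝ≥0∞) (hg : Measurable g)
    (hsymm : ∀ x, g (-x) = g x)
    (f : ℝ → ℝ≥0∞) (hf : ∀ ⦃s t : ℝ⦄, 0 ≤ s → s ≤ t → f t ≤ f s)
    (hgg : ∀ z : EuclideanSpace ℝ (Fin d), ∫⁻ w, g (z - w) * g w ∂volume = f ‖z‖)
    (T : EuclideanSpace ℝ (Fin d) → EuclideanSpace ℝ (Fin d)) (hT : LipschitzWith 1 T)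
    (μ : Measure (EuclideanSpace ℝ (Fin d))) [IsFiniteMeasureOnCompacts μ] :
    ∫⁻ x, (∫⁻ y, g (x - y) ∂μ) ^ 2 ∂volume
      ≤ ∫⁻ x, (∫⁻ y, g (x - y) ∂(μ.map T)) ^ 2 ∂volume := by
  rw [lintegral_sq_lintegral_comp_sub hg hsymm, lintegral_sq_lintegral_comp_sub hg hsymm]
  refine lintegral_lintegral_comp_sub_le_map (measurable_lintegral_comp_sub_mul hg)
    hT.continuous.measurable (fun y y' => ?_) μ
  have hdist : ‖T y - T y'‖ ≤ ‖y - y'‖ := by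
    simpa [dist_eq_norm] using hT.dist_le_mul y y'
  rw [hgg, hgg]
  exact hf (norm_nonneg _) hdist
end

section
/- Let d ≥ 2, let B ⊂ ℝ^{d−1} be a Borel set, let I = (a,b) ⊂ ℝ be a bounded open interval, and let k > 0. Let φ : B × I → ℝ and γ : B → (a,b) be Borel measurable with |φ(x,y)| ≥ k·|y − γ(x)| for almost every (x,y) ∈ B × I. Let v ∈ L^∞(B × I) and define ṽ(x) := ∫_a^b v(x,y) dλ¹(y) for x ∈ B. Then ‖v‖_{L^∞(B×I)} · ∫_{B×I} |φ v| dλ^d ≥ (k/8) · ∫_B ṽ(x)² dλ^{d−1}(x). -/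
/-!
On a fibre over `x`, write `T = ∫ w`, `M` for the bound on `|w|` and `c = γ(x)`. On the window
`(c - δ, c + δ)` the function `|w|` has mass at most `2δM`; outside it `|ψ| ≥ kδ`, so
`|w| ≤ |ψ w| / (kδ)`. With `δ = |T| / (4M)` this gives `|T| / 2 ≤ 4M ∫ |ψ w| / (k |T|)`,
i.e. `(k/8) T² ≤ M ∫ |ψ w|`. Integrating over the fibres by Tonelli gives the theorem.
-/

open MeasureTheory Set

lemma ofReal_abs_le_indicator_Ioo_add_of_mul_abs_sub_le {k δ M c y w ψ : ℝ}
    (hk : 0 < k) (hδ : 0 < δ) (hw : |w| ≤ M) (hψ : k * |y - c| ≤ |ψ|) :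
    ENNReal.ofReal |w| ≤ (Ioo (c - δ) (c + δ)).indicator (fun _ => ENNReal.ofReal M) y
      + ENNReal.ofReal (k * δ)⁻¹ * ENNReal.ofReal |ψ * w| := by
  by_cases hy : y ∈ Ioo (c - δ) (c + δ)
  · rw [indicator_of_mem hy]
    exact le_add_right (ENNReal.ofReal_le_ofReal hw)
  · have hfar : δ ≤ |y - c| := by
      rw [mem_Ioo, not_and_or, not_lt, not_lt] at hy
      rcases hy with h | h
      · rw [abs_sub_comm]; exact le_abs.2 (Or.inl (by linarith))
      · exact le_abs.2 (Or.inl (by linarith))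
    have : |w| ≤ (k * δ)⁻¹ * |ψ * w| := by
      rw [abs_mul, le_inv_mul_iff₀ (by positivity)]
      gcongr
      calc k * δ ≤ k * |y - c| := by gcongr
        _ ≤ |ψ| := hψ
    rw [indicator_of_notMem hy, zero_add, ← ENNReal.ofReal_mul (by positivity)]
    exact ENNReal.ofReal_le_ofReal this

lemma lintegral_ofReal_abs_le_of_mul_abs_sub_le {S : Set ℝ} {w ψ : ℝ → ℝ} {c k M δ : ℝ}
    (hk : 0 < k) (hδ : 0 < δ)
    (hw : ∀ᵐ y ∂volume.restrict S, |w y| ≤ M)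
    (hψ : ∀ᵐ y ∂volume.restrict S, k * |y - c| ≤ |ψ y|) :
    ∫⁻ y in S, ENNReal.ofReal |w y|
      ≤ ENNReal.ofReal (M * (2 * δ))
        + ENNReal.ofReal (k * δ)⁻¹ * ∫⁻ y in S, ENNReal.ofReal |ψ y * w y| := by
  set J := Ioo (c - δ) (c + δ)
  have hJ : volume.restrict S J ≤ ENNReal.ofReal (2 * δ) := by
    calc volume.restrict S J ≤ volume J := Measure.restrict_apply_le _ _
      _ = ENNReal.ofReal (2 * δ) := by rw [Real.volume_Ioo]; ring_nf
  calc ∫⁻ y in S, ENNReal.ofReal |w y|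
      ≤ ∫⁻ y in S, J.indicator (fun _ => ENNReal.ofReal M) y
          + ENNReal.ofReal (k * δ)⁻¹ * ENNReal.ofReal |ψ y * w y| :=
        lintegral_mono_ae <| by
          filter_upwards [hw, hψ] with y hwy hψy
          exact ofReal_abs_le_indicator_Ioo_add_of_mul_abs_sub_le hk hδ hwy hψy
    _ = ENNReal.ofReal M * volume.restrict S J
          + ENNReal.ofReal (k * δ)⁻¹ * ∫⁻ y in S, ENNReal.ofReal |ψ y * w y| := by
        rw [lintegral_add_left (measurable_const.indicator measurableSet_Ioo),
          lintegral_indicator_const measurableSet_Ioo,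
          lintegral_const_mul' _ _ ENNReal.ofReal_ne_top]
    _ ≤ _ := by
        rw [ENNReal.ofReal_mul' (by positivity)]
        gcongr

lemma sq_setIntegral_le_of_mul_abs_sub_le {S : Set ℝ} {w ψ : ℝ → ℝ} {c k M : ℝ}
    (hk : 0 < k) (hM : 0 ≤ M)
    (hw : ∀ᵐ y ∂volume.restrict S, |w y| ≤ M)
    (hψ : ∀ᵐ y ∂volume.restrict S, k * |y - c| ≤ |ψ y|) :
    ENNReal.ofReal (k / 8) * ENNReal.ofReal ((∫ y in S, w y) ^ 2)
      ≤ ENNReal.ofReal M * ∫⁻ y in S, ENNReal.ofReal |ψ y * w y| := by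
  set T := ∫ y in S, w y
  set R := ∫⁻ y in S, ENNReal.ofReal |ψ y * w y|
  rcases eq_or_ne T 0 with hT | hT
  · simp [hT]
  have hMpos : 0 < M := by
    refine hM.lt_of_ne fun hM0 => hT (integral_eq_zero_of_ae ?_)
    filter_upwards [hw] with y hy
    exact abs_nonpos_iff.1 (hM0 ▸ hy)
  rcases eq_or_ne R ⊤ with hR | hR
  · simp [hR, hMpos]
  set δ := |T| / (4 * M)
  have hδ : 0 < δ := by positivity
  have key : |T| ≤ M * (2 * δ) + (k * δ)⁻¹ * R.toReal := by
    have h : ENNReal.ofReal |T|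
        ≤ ENNReal.ofReal (M * (2 * δ)) + ENNReal.ofReal (k * δ)⁻¹ * R := by
      rw [← Real.enorm_eq_ofReal_abs]
      refine (enorm_integral_le_lintegral_enorm w).trans ?_
      simpa only [Real.enorm_eq_ofReal_abs] using
        lintegral_ofReal_abs_le_of_mul_abs_sub_le hk hδ hw hψ
    rw [← ENNReal.ofReal_toReal hR, ← ENNReal.ofReal_mul (by positivity),
      ← ENNReal.ofReal_add (by positivity) (by positivity)] at h
    exact (ENNReal.ofReal_le_ofReal_iff (by positivity)).1 h
  have hsq : k * T ^ 2 ≤ 8 * M * R.toReal := by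
    have hTpos : 0 < |T| := abs_pos.2 hT
    have h2 : M * (2 * δ) = |T| / 2 := by simp only [δ]; field_simp; ring
    have h3 : (k * δ)⁻¹ * R.toReal = 4 * M * R.toReal / (k * |T|) := by
      simp only [δ]; field_simp
    rw [h2, h3] at key
    rw [← sq_abs]
    have hhalf : |T| / 2 ≤ 4 * M * R.toReal / (k * |T|) := by linarith
    rw [le_div_iff₀ (by positivity)] at hhalf
    nlinarith
  rw [← ENNReal.ofReal_toReal hR, ← ENNReal.ofReal_mul (by positivity),
    ← ENNReal.ofReal_mul hM]
  exact ENNReal.ofReal_le_ofReal (by linarith)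

theorem stmt6_general (d : ℕ)
    (B : Set (EuclideanSpace ℝ (Fin (d - 1))))
    (a b k : ℝ) (hk : 0 < k)
    (φ v : EuclideanSpace ℝ (Fin (d - 1)) × ℝ → ℝ)
    (γ : EuclideanSpace ℝ (Fin (d - 1)) → ℝ)
    (hφmeas : Measurable φ)
    (hφ : ∀ᵐ z ∂(volume.restrict (B ×ˢ Set.Ioo a b)), k * |z.2 - γ z.1| ≤ |φ z|)
    (hv : MemLp v ⊤ (volume.restrict (B ×ˢ Set.Ioo a b))) :
    ENNReal.ofReal (k / 8)
        * ∫⁻ x in B, ENNReal.ofReal ((∫ y in Set.Ioo a b, v (x, y)) ^ 2) ∂volume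
      ≤ eLpNorm v ⊤ (volume.restrict (B ×ˢ Set.Ioo a b))
        * ∫⁻ z in B ×ˢ Set.Ioo a b, ENNReal.ofReal |φ z * v z| := by
  set μ := volume.restrict (B ×ˢ Ioo a b)
  have hμ : μ = (volume.restrict B).prod (volume.restrict (Ioo a b)) := by
    rw [Measure.prod_restrict, ← Measure.volume_eq_prod]
  set M := eLpNorm v ⊤ μ
  have hM : M ≠ ⊤ := hv.eLpNorm_ne_top
  have hbound : ∀ᵐ z ∂μ, |v z| ≤ M.toReal := by
    filter_upwards [enorm_ae_le_eLpNormEssSup v μ] with z hz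
    rw [← Real.norm_eq_abs, ← toReal_enorm]
    exact ENNReal.toReal_mono hM (hz.trans_eq eLpNorm_exponent_top.symm)
  have hslices := Measure.ae_ae_of_ae_prod (hμ ▸ hφ.and hbound)
  have hmeas : AEMeasurable (fun z => ENNReal.ofReal |φ z * v z|) μ :=
    (hφmeas.aemeasurable.mul hv.1.aemeasurable).abs.ennreal_ofReal
  calc ENNReal.ofReal (k / 8) * ∫⁻ x in B, ENNReal.ofReal ((∫ y in Ioo a b, v (x, y)) ^ 2)
      = ∫⁻ x in B, ENNReal.ofReal (k / 8) * ENNReal.ofReal ((∫ y in Ioo a b, v (x, y)) ^ 2) :=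
        (lintegral_const_mul' _ _ ENNReal.ofReal_ne_top).symm
    _ ≤ ∫⁻ x in B, ENNReal.ofReal M.toReal
          * ∫⁻ y in Ioo a b, ENNReal.ofReal |φ (x, y) * v (x, y)| :=
        lintegral_mono_ae <| hslices.mono fun x hx =>
          sq_setIntegral_le_of_mul_abs_sub_le (c := γ x) hk ENNReal.toReal_nonneg
            (hx.mono fun _ hy => hy.2) (hx.mono fun _ hy => hy.1)
    _ = M * ∫⁻ z, ENNReal.ofReal |φ z * v z| ∂μ := by
        rw [lintegral_const_mul' _ _ ENNReal.ofReal_ne_top, ENNReal.ofReal_toReal hM, hμ,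
          lintegral_prod _ (hμ ▸ hmeas)]

/-- Localized version of the one-dimensional growth estimate:
identifying `ℝ^d` with `ℝ^{d−1} × ℝ`, if `|φ(x,y)| ≥ k|y − γ(x)|` a.e. on `B × (a,b)`,
then `‖v‖_{L^∞(B×I)} ∫_{B×I} |φ v| dλ^d ≥ (k/8) ∫_B ṽ(x)² dλ^{d−1}(x)`,
where `ṽ(x) = ∫_a^b v(x,y) dy`. -/
theorem stmt6 (d : ℕ) (hd : 2 ≤ d)
    (B : Set (EuclideanSpace ℝ (Fin (d - 1)))) (hB : MeasurableSet B)
    (a b k : ℝ) (hab : a < b) (hk : 0 < k)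
    (φ v : EuclideanSpace ℝ (Fin (d - 1)) × ℝ → ℝ)
    (γ : EuclideanSpace ℝ (Fin (d - 1)) → ℝ)
    (hγmeas : Measurable γ) (hγ : ∀ x ∈ B, γ x ∈ Set.Ioo a b)
    (hφmeas : Measurable φ)
    (hφ : ∀ᵐ z ∂(volume.restrict (B ×ˢ Set.Ioo a b)), k * |z.2 - γ z.1| ≤ |φ z|)
    (hv : MemLp v ⊤ (volume.restrict (B ×ˢ Set.Ioo a b))) :
    ENNReal.ofReal (k / 8)
        * ∫⁻ x in B, ENNReal.ofReal ((∫ y in Set.Ioo a b, v (x, y)) ^ 2) ∂volume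
      ≤ eLpNorm v ⊤ (volume.restrict (B ×ˢ Set.Ioo a b))
        * ∫⁻ z in B ×ˢ Set.Ioo a b, ENNReal.ofReal |φ z * v z| :=
  stmt6_general d B a b k hk φ v γ hφmeas hφ hv
end

section
/- Let Ω ⊂ ℝ^d be a Borel set with λ^d(Ω) < ∞, let φ : Ω → ℝ be measurable, and let C > 0 be such that λ^d({x ∈ Ω : |φ(x)| ≤ ε}) ≤ C·ε for all ε > 0. Then for every v ∈ L^∞(Ω): ‖v‖_{L^∞(Ω)} · ∫_Ω |φ v| dλ^d ≥ (1/(4C)) · ‖v‖_{L¹(Ω)}². -/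
/-!
Split `Ω` at the level `ε` of `|φ|`. On `{|φ| ≤ ε}`, a set of measure at most `Cε`, we have
`|v| ≤ ‖v‖_∞`; off it, `|v| ≤ |φ v| / ε`. Hence `‖v‖₁ ≤ Cε ‖v‖_∞ + ε⁻¹ ∫_Ω |φ v|` for every
`ε > 0`, and optimising in `ε` gives `‖v‖₁² ≤ 4C ‖v‖_∞ ∫_Ω |φ v|`.
-/

open MeasureTheory Set
open scoped ENNReal

theorem sq_le_four_mul_mul_of_forall_le_mul_add_div {n a i : ℝ} (hn : 0 ≤ n) (hi : 0 ≤ i)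
    (ha : 0 < a) (h : ∀ ε : ℝ, 0 < ε → n ≤ a * ε + i / ε) : n ^ 2 ≤ 4 * a * i := by
  rcases hn.eq_or_lt with rfl | hn
  · simp only [ne_eq, OfNat.ofNat_ne_zero, not_false_eq_true, zero_pow]
    positivity
  have hopt := h (n / (2 * a)) (by positivity)
  have hsimp : a * (n / (2 * a)) + i / (n / (2 * a)) = n / 2 + 2 * a * i / n := by
    field_simp
  rw [hsimp, ← sub_le_iff_le_add', le_div_iff₀ hn] at hopt
  nlinarith

theorem ENNReal.sq_le_four_mul_mul_of_forall_le_mul_add_inv_mul {N a I : ℝ≥0∞} (ha0 : a ≠ 0)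
    (ha : a ≠ ∞)
    (h : ∀ ε : ℝ, 0 < ε → N ≤ a * ENNReal.ofReal ε + (ENNReal.ofReal ε)⁻¹ * I) :
    N ^ 2 ≤ 4 * a * I := by
  rcases eq_or_ne I ∞ with rfl | hI
  · simp [ha0]
  have hinv {ε : ℝ} (hε : 0 < ε) : (ENNReal.ofReal ε)⁻¹ ≠ ∞ :=
    ENNReal.inv_ne_top.2 (ENNReal.ofReal_pos.2 hε).ne'
  have hN : N ≠ ∞ := ne_top_of_le_ne_top (by simp [ha, hI]) (h 1 one_pos)
  have hreal : ∀ ε : ℝ, 0 < ε → N.toReal ≤ a.toReal * ε + I.toReal / ε := by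
    intro ε hε
    have := ENNReal.toReal_mono (by finiteness [hinv hε]) (h ε hε)
    rwa [ENNReal.toReal_add (by finiteness) (by finiteness [hinv hε]), ENNReal.toReal_mul,
      ENNReal.toReal_mul, ENNReal.toReal_inv, ENNReal.toReal_ofReal hε.le, ← div_eq_inv_mul] at this
  rw [← ENNReal.toReal_le_toReal (by finiteness) (by finiteness)]
  simpa [ENNReal.toReal_mul, ENNReal.toReal_pow, mul_assoc] using
    sq_le_four_mul_mul_of_forall_le_mul_add_div ENNReal.toReal_nonneg ENNReal.toReal_nonneg
      (ENNReal.toReal_pos ha0 ha) hreal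

theorem eLpNorm_one_restrict_le_mul_measure_sublevel_add {α : Type*} [MeasurableSpace α]
    {μ : Measure α} {s : Set α} {φ f : α → ℝ} (hφ : Measurable φ) {ε : ℝ} (hε : 0 < ε) :
    eLpNorm f 1 (μ.restrict s)
      ≤ eLpNorm f ∞ (μ.restrict s) * μ {x | x ∈ s ∧ |φ x| ≤ ε}
        + (ENNReal.ofReal ε)⁻¹ * ∫⁻ x in s, ENNReal.ofReal |φ x * f x| ∂μ := by
  set T := {x | x ∈ s ∧ |φ x| ≤ ε}
  set U := {x | ε < |φ x|}
  have hcover : s ⊆ T ∪ (s ∩ U) := fun x hx ↦ (le_or_gt |φ x| ε).imp (⟨hx, ·⟩) (⟨hx, ·⟩)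
  have hT : ∫⁻ x in T, ‖f x‖ₑ ∂μ ≤ eLpNorm f ∞ (μ.restrict s) * μ T := by
    have hae : ∀ᵐ x ∂μ.restrict s, ‖f x‖ₑ ≤ eLpNorm f ∞ (μ.restrict s) := by
      rw [eLpNorm_exponent_top]
      exact ae_le_eLpNormEssSup
    rw [← setLIntegral_const]
    exact lintegral_mono_ae (ae_mono (Measure.restrict_mono (fun x hx ↦ hx.1) le_rfl) hae)
  have hU : ∫⁻ x in s ∩ U, ‖f x‖ₑ ∂μ
      ≤ (ENNReal.ofReal ε)⁻¹ * ∫⁻ x in s, ENNReal.ofReal |φ x * f x| ∂μ := by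
    have hUae : ∀ᵐ x ∂μ.restrict (s ∩ U), ε < |φ x| :=
      ae_mono (Measure.restrict_mono inter_subset_right le_rfl)
        (ae_restrict_mem (measurableSet_lt measurable_const hφ.abs))
    rw [← lintegral_const_mul' _ _ (ENNReal.inv_ne_top.2 (ENNReal.ofReal_pos.2 hε).ne')]
    refine (lintegral_mono_ae ?_).trans
      (lintegral_mono' (Measure.restrict_mono inter_subset_left le_rfl) le_rfl)
    filter_upwards [hUae] with x hx
    rw [← ENNReal.ofReal_inv_of_pos hε, ← ENNReal.ofReal_mul (inv_nonneg.2 hε.le),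
      ← ofReal_norm, Real.norm_eq_abs, abs_mul]
    exact ENNReal.ofReal_le_ofReal
      ((le_inv_mul_iff₀ hε).2 (mul_le_mul_of_nonneg_right hx.le (abs_nonneg _)))
  calc eLpNorm f 1 (μ.restrict s) = ∫⁻ x in s, ‖f x‖ₑ ∂μ := eLpNorm_one_eq_lintegral_enorm
    _ ≤ ∫⁻ x in T ∪ (s ∩ U), ‖f x‖ₑ ∂μ :=
      lintegral_mono' (Measure.restrict_mono hcover le_rfl) le_rfl
    _ ≤ _ := (lintegral_union_le _ _ _).trans (add_le_add hT hU)

theorem stmt8_general (d : ℕ) (Ω : Set (EuclideanSpace ℝ (Fin d)))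
    (φ : EuclideanSpace ℝ (Fin d) → ℝ) (hφmeas : Measurable φ)
    (C : ℝ) (hC : 0 < C)
    (hlevel : ∀ ε : ℝ, 0 < ε →
      volume {x | x ∈ Ω ∧ |φ x| ≤ ε} ≤ ENNReal.ofReal (C * ε))
    (v : EuclideanSpace ℝ (Fin d) → ℝ) (hv : MemLp v ⊤ (volume.restrict Ω)) :
    ENNReal.ofReal (1 / (4 * C)) * (eLpNorm v 1 (volume.restrict Ω)) ^ 2
      ≤ eLpNorm v ⊤ (volume.restrict Ω)
        * ∫⁻ x in Ω, ENNReal.ofReal |φ x * v x| := by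
  set M := eLpNorm v ⊤ (volume.restrict Ω)
  rcases eq_or_ne M 0 with hM0 | hM0
  · have hv0 : v =ᵐ[volume.restrict Ω] 0 := (eLpNorm_eq_zero_iff hv.1 (by simp)).1 hM0
    simp [eLpNorm_congr_ae hv0]
  have hsplit (ε : ℝ) (hε : 0 < ε) : eLpNorm v 1 (volume.restrict Ω)
      ≤ M * ENNReal.ofReal C * ENNReal.ofReal ε
        + (ENNReal.ofReal ε)⁻¹ * ∫⁻ x in Ω, ENNReal.ofReal |φ x * v x| := by
    refine (eLpNorm_one_restrict_le_mul_measure_sublevel_add hφmeas hε).trans ?_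
    rw [mul_assoc, ← ENNReal.ofReal_mul hC.le]
    gcongr
    exact hlevel ε hε
  have hsq := ENNReal.sq_le_four_mul_mul_of_forall_le_mul_add_inv_mul
    (mul_ne_zero hM0 (ENNReal.ofReal_pos.2 hC).ne') (by finiteness [hv.eLpNorm_ne_top]) hsplit
  have hconst : ENNReal.ofReal (1 / (4 * C)) * 4 * ENNReal.ofReal C = 1 := by
    rw [← ENNReal.ofReal_ofNat 4, ← ENNReal.ofReal_mul (by positivity),
      ← ENNReal.ofReal_mul (by positivity)]
    field_simp
    simp
  calc ENNReal.ofReal (1 / (4 * C)) * eLpNorm v 1 (volume.restrict Ω) ^ 2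
      ≤ ENNReal.ofReal (1 / (4 * C)) * (4 * (M * ENNReal.ofReal C)
          * ∫⁻ x in Ω, ENNReal.ofReal |φ x * v x|) := by gcongr
    _ = ENNReal.ofReal (1 / (4 * C)) * 4 * ENNReal.ofReal C
          * (M * ∫⁻ x in Ω, ENNReal.ofReal |φ x * v x|) := by ring
    _ = M * ∫⁻ x in Ω, ENNReal.ofReal |φ x * v x| := by rw [hconst, one_mul]

/-- If the measure of the sublevel sets `{|φ| ≤ ε}` in `Ω` grows at
most linearly, `λ^d({x ∈ Ω : |φ x| ≤ ε}) ≤ Cε`, then for every `v ∈ L^∞(Ω)`,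
`‖v‖_{L^∞(Ω)} ∫_Ω |φ v| dλ^d ≥ (1/(4C)) ‖v‖_{L¹(Ω)}²`. -/
theorem stmt8 (d : ℕ) (Ω : Set (EuclideanSpace ℝ (Fin d))) (hΩ : MeasurableSet Ω)
    (hΩfin : volume Ω < ⊤)
    (φ : EuclideanSpace ℝ (Fin d) → ℝ) (hφmeas : Measurable φ)
    (C : ℝ) (hC : 0 < C)
    (hlevel : ∀ ε : ℝ, 0 < ε →
      volume {x | x ∈ Ω ∧ |φ x| ≤ ε} ≤ ENNReal.ofReal (C * ε))
    (v : EuclideanSpace ℝ (Fin d) → ℝ) (hv : MemLp v ⊤ (volume.restrict Ω)) :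
    ENNReal.ofReal (1 / (4 * C)) * (eLpNorm v 1 (volume.restrict Ω)) ^ 2
      ≤ eLpNorm v ⊤ (volume.restrict Ω)
        * ∫⁻ x in Ω, ENNReal.ofReal |φ x * v x| :=
  stmt8_general d Ω φ hφmeas C hC hlevel v hv
end

section
/- Let Ω ⊂ ℝ^d be open and bounded and let φ̄ ∈ C¹(ℝ^d) satisfy the structural assumption ∇φ̄(x) ≠ 0 for every x ∈ {φ̄ = 0} ∩ cl(Ω). Then there exists C > 0 such that λ^d({x ∈ cl(Ω) : |φ̄(x)| ≤ ε}) ≤ C·ε for all ε > 0. -/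
/-!
Near a point of `cl(Ω)` where `φ̄` vanishes, some directional derivative `∂ₑφ̄` is at least `1/2`
on a ball, so by the mean value theorem every line in direction `e` meets `{|φ̄| ≤ ε}` inside that
ball in a set of length `O(ε)`. Such a set has volume `O(ε)`: about `1/ε` of its translates along
`e` are pairwise disjoint and stay inside a fixed ball. Near a point where `φ̄` does not vanish,
`{|φ̄| ≤ ε}` is locally empty for small `ε`. Compactness of `cl(Ω)` glues the local bounds.
-/

open MeasureTheory Set Metric Topology NNReal Pointwise

theorem card_mul_measure_le_of_pairwiseDisjoint_vadd {G ι : Type*} [AddGroup G]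
    [MeasurableSpace G] [MeasurableAdd G] (μ : Measure G)
    [μ.IsAddLeftInvariant] {S A : Set G} (hS : MeasurableSet S) {I : Finset ι} {g : ι → G}
    (hdisj : (I : Set ι).PairwiseDisjoint fun i => g i +ᵥ S) (hA : ∀ i ∈ I, g i +ᵥ S ⊆ A) :
    I.card * μ S ≤ μ A := by
  calc I.card * μ S = ∑ i ∈ I, μ (g i +ᵥ S) := by simp [measure_vadd]
    _ = μ (⋃ i ∈ I, g i +ᵥ S) := (measure_biUnion_finset hdisj fun i _ => hS.const_vadd _).symm
    _ ≤ μ A := measure_mono (iUnion₂_subset hA)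

theorem measure_le_of_forall_add_smul_mem {E : Type*} [NormedAddCommGroup E] [NormedSpace ℝ E]
    [MeasurableSpace E] [MeasurableAdd E] (μ : Measure E) [μ.IsAddLeftInvariant]
    {S : Set E} (hS : MeasurableSet S) {z : E} {R : ℝ} (hR : 0 < R) (hSR : S ⊆ ball z R)
    {v : E} (hv : v ≠ 0) (hline : ∀ p ∈ S, ∀ t : ℝ, p + t • v ∈ S → |t| ≤ 1) :
    μ S ≤ ENNReal.ofReal (2 * ‖v‖ / R) * μ (ball z (2 * R)) := by
  have hv' : 0 < ‖v‖ := norm_pos_iff.2 hv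
  -- `N ≈ R / (2‖v‖)` translates of `S` by even multiples of `v` are disjoint and fit in the ball.
  set N := ⌈R / (2 * ‖v‖)⌉₊
  have hdisj : (Finset.range N : Set ℕ).PairwiseDisjoint fun k => (2 * k : ℝ) • v +ᵥ S := by
    intro i _ j _ hij
    refine disjoint_left.2 fun y ⟨p, hp, hpy⟩ ⟨q, hq, hqy⟩ => ?_
    have hpq : q + (2 * ((j : ℝ) - i)) • v = p := by
      simp only [vadd_eq_add] at hpy hqy
      rw [← hqy] at hpy
      linear_combination (norm := module) -hpy
    have h := abs_le.1 (hline q hq _ (hpq ▸ hp))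
    rcases Nat.lt_or_gt_of_ne hij with hlt | hlt
    · have : (i : ℝ) + 1 ≤ j := by exact_mod_cast hlt
      linarith
    · have : (j : ℝ) + 1 ≤ i := by exact_mod_cast hlt
      linarith
  have hball : ∀ k ∈ Finset.range N, (2 * k : ℝ) • v +ᵥ S ⊆ ball z (2 * R) := by
    rintro k hk _ ⟨p, hp, rfl⟩
    have hk : (k : ℝ) < R / (2 * ‖v‖) := Nat.lt_ceil.1 (Finset.mem_range.1 hk)
    have hp : dist p z < R := hSR hp
    rw [lt_div_iff₀ (by positivity)] at hk
    rw [mem_ball, dist_eq_norm]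
    dsimp only
    rw [vadd_eq_add, add_sub_assoc]
    calc ‖(2 * k : ℝ) • v + (p - z)‖ ≤ 2 * k * ‖v‖ + dist p z := by
          grw [norm_add_le, norm_smul, Real.norm_of_nonneg (by positivity), dist_eq_norm]
      _ < 2 * R := by linarith
  have hN : ENNReal.ofReal (R / (2 * ‖v‖)) ≤ N := by
    simpa using ENNReal.ofReal_le_ofReal (Nat.le_ceil (R / (2 * ‖v‖)))
  calc μ S = ENNReal.ofReal (2 * ‖v‖ / R) * ENNReal.ofReal (R / (2 * ‖v‖)) * μ S := by
        have : 2 * ‖v‖ / R * (R / (2 * ‖v‖)) = 1 := by field_simp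
        rw [← ENNReal.ofReal_mul (by positivity), this, ENNReal.ofReal_one, one_mul]
    _ ≤ ENNReal.ofReal (2 * ‖v‖ / R) * (N * μ S) := by grw [hN, mul_assoc]
    _ ≤ ENNReal.ofReal (2 * ‖v‖ / R) * μ (ball z (2 * R)) := by
        grw [← card_mul_measure_le_of_pairwiseDisjoint_vadd μ hS hdisj hball, Finset.card_range]

def LinearSublevelBound {X : Type*} [MeasurableSpace X] (μ : Measure X) (φ : X → ℝ)
    (t : Set X) : Prop :=
  ∃ C : ℝ≥0, ∀ ε : ℝ, 0 < ε → μ ({y | |φ y| ≤ ε} ∩ t) ≤ ENNReal.ofReal (C * ε)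

namespace LinearSublevelBound

variable {X : Type*} [MeasurableSpace X] {μ : Measure X} {φ : X → ℝ} {s t : Set X}

theorem empty : LinearSublevelBound μ φ ∅ := ⟨0, by simp⟩

theorem mono (hst : s ⊆ t) (ht : LinearSublevelBound μ φ t) : LinearSublevelBound μ φ s :=
  let ⟨C, hC⟩ := ht
  ⟨C, fun ε hε => (measure_mono (inter_subset_inter_right _ hst)).trans (hC ε hε)⟩

theorem union (hs : LinearSublevelBound μ φ s) (ht : LinearSublevelBound μ φ t) :
    LinearSublevelBound μ φ (s ∪ t) := by
  obtain ⟨C, hC⟩ := hs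
  obtain ⟨D, hD⟩ := ht
  refine ⟨C + D, fun ε hε => ?_⟩
  calc μ ({y | |φ y| ≤ ε} ∩ (s ∪ t))
      ≤ μ ({y | |φ y| ≤ ε} ∩ s) + μ ({y | |φ y| ≤ ε} ∩ t) := by
        rw [inter_union_distrib_left]; exact measure_union_le _ _
    _ ≤ ENNReal.ofReal (C * ε) + ENNReal.ofReal (D * ε) := add_le_add (hC ε hε) (hD ε hε)
    _ = ENNReal.ofReal ((C + D : ℝ≥0) * ε) := by
        rw [← ENNReal.ofReal_add (by positivity) (by positivity), NNReal.coe_add, add_mul]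

theorem of_le_abs (ht : μ t ≠ ⊤) {a : ℝ} (ha : 0 < a) (hφ : ∀ y ∈ t, a ≤ |φ y|) :
    LinearSublevelBound μ φ t := by
  refine ⟨(μ t).toNNReal / a.toNNReal, fun ε hε => ?_⟩
  rcases lt_or_ge ε a with hεa | haε
  · have : {y | |φ y| ≤ ε} ∩ t = ∅ :=
      eq_empty_of_forall_notMem fun y ⟨hy, hyt⟩ => (hφ y hyt).not_gt (hy.trans_lt hεa)
    simp [this]
  · calc μ ({y | |φ y| ≤ ε} ∩ t) ≤ μ t := measure_mono inter_subset_right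
      _ = ENNReal.ofReal (μ t).toReal := (ENNReal.ofReal_toReal ht).symm
      _ ≤ ENNReal.ofReal (((μ t).toNNReal / a.toNNReal : ℝ≥0) * ε) := by
        refine ENNReal.ofReal_le_ofReal ?_
        rw [NNReal.coe_div, Real.coe_toNNReal _ ha.le, ENNReal.coe_toNNReal_eq_toReal,
          div_mul_eq_mul_div, le_div_iff₀ ha]
        exact mul_le_mul_of_nonneg_left haε ENNReal.toReal_nonneg

end LinearSublevelBound

theorem IsCompact.linearSublevelBound {X : Type*} [TopologicalSpace X] [MeasurableSpace X]
    {μ : Measure X} {φ : X → ℝ} {K : Set X} (hK : IsCompact K)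
    (hloc : ∀ x ∈ K, ∃ t ∈ 𝓝 x, LinearSublevelBound μ φ t) : LinearSublevelBound μ φ K :=
  hK.induction_on .empty (fun _ _ hst ht => ht.mono hst) (fun _ _ => .union) fun x hx =>
    let ⟨t, ht, h⟩ := hloc x hx
    ⟨t, mem_nhdsWithin_of_mem_nhds ht, h⟩

theorem mul_abs_le_abs_sub_of_le_fderiv_apply {E : Type*} [NormedAddCommGroup E]
    [NormedSpace ℝ E] {s : Set E} (hs : Convex ℝ s) {φ : E → ℝ}
    (hφ : ∀ y ∈ s, DifferentiableAt ℝ φ y) {e : E} {c : ℝ}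
    (hc : ∀ y ∈ s, c ≤ fderiv ℝ φ y e) {p : E} (hp : p ∈ s) {t : ℝ} (ht : p + t • e ∈ s) :
    c * |t| ≤ |φ (p + t • e) - φ p| := by
  set D := {τ : ℝ | p + τ • e ∈ s}
  have hD : Convex ℝ D :=
    (hs.translate_preimage_right p).is_linear_preimage (IsLinearMap.isLinearMap_smul' e)
  have hderiv : ∀ τ ∈ D, HasDerivAt (fun τ => φ (p + τ • e)) (fderiv ℝ φ (p + τ • e) e) τ :=
    fun τ hτ => (hφ _ hτ).hasFDerivAt.comp_hasDerivAt τ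
      (((hasDerivAt_id τ).smul_const e).const_add p |>.congr_deriv (one_smul ℝ e))
  have hgrowth := hD.mul_sub_le_image_sub_of_le_deriv
    (fun τ hτ => (hderiv τ hτ).continuousAt.continuousWithinAt)
    (fun τ hτ => (hderiv τ (interior_subset hτ)).differentiableAt.differentiableWithinAt)
    fun τ hτ => by
      rw [(hderiv τ (interior_subset hτ)).deriv]; exact hc _ (interior_subset hτ : τ ∈ D)
  have h0 : (0 : ℝ) ∈ D := by simpa [D] using hp
  rcases le_total 0 t with h | h
  · have := hgrowth 0 h0 t ht h
    simp only [zero_smul, add_zero, sub_zero] at this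
    rw [abs_of_nonneg h]
    exact this.trans (le_abs_self _)
  · have := hgrowth t ht 0 h0 h
    simp only [zero_smul, add_zero, zero_sub] at this
    rw [abs_of_nonpos h, abs_sub_comm]
    linarith [le_abs_self (φ p - φ (p + t • e))]

section LocalBounds

variable {E : Type*} [NormedAddCommGroup E] [NormedSpace ℝ E] [FiniteDimensional ℝ E]
  [MeasurableSpace E] [BorelSpace E] (μ : Measure E) [μ.IsAddHaarMeasure] {φ : E → ℝ}

theorem exists_ball_linearSublevelBound_of_fderiv_ne_zero (hφ : ContDiff ℝ 1 φ) {x : E}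
    (hx : fderiv ℝ φ x ≠ 0) : ∃ r > 0, LinearSublevelBound μ φ (ball x r) := by
  obtain ⟨e, he⟩ : ∃ e, fderiv ℝ φ x e = 1 := by
    obtain ⟨v, hv⟩ := DFunLike.ne_iff.1 hx
    exact ⟨(fderiv ℝ φ x v)⁻¹ • v, by simpa using inv_mul_cancel₀ hv⟩
  have he0 : e ≠ 0 := by rintro rfl; simp at he
  have hcont : Continuous fun y => fderiv ℝ φ y e :=
    (hφ.continuous_fderiv one_ne_zero).clm_apply continuous_const
  obtain ⟨r, hr, hball⟩ := Metric.eventually_nhds_iff_ball.1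
    (hcont.continuousAt.eventually (lt_mem_nhds (show (1 / 2 : ℝ) < fderiv ℝ φ x e by
      rw [he]; norm_num)))
  set M := ENNReal.ofReal (8 * ‖e‖ / r) * μ (ball x (2 * r))
  have hM : M ≠ ⊤ := ENNReal.mul_ne_top ENNReal.ofReal_ne_top measure_ball_lt_top.ne
  refine ⟨r, hr, M.toNNReal, fun ε hε => ?_⟩
  set S := {y | |φ y| ≤ ε} ∩ ball x r
  have hS : MeasurableSet S :=
    (isClosed_le (continuous_abs.comp hφ.continuous) continuous_const).measurableSet.inter
      measurableSet_ball
  -- Since `∂ₑφ > 1/2` on the ball, `φ` changes by more than `2ε` along a step `4ε • e` in it.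
  have hline : ∀ p ∈ S, ∀ t : ℝ, p + t • (4 * ε) • e ∈ S → |t| ≤ 1 := by
    rintro p ⟨hpε : |φ p| ≤ ε, hp⟩ t ⟨hqε : |φ _| ≤ ε, hq⟩
    rw [smul_smul] at hqε hq
    have hgrowth := mul_abs_le_abs_sub_of_le_fderiv_apply (convex_ball x r)
      (fun y _ => hφ.differentiable one_ne_zero y) (fun y hy => (hball y hy).le) hp hq
    rw [abs_mul, abs_of_pos (by positivity : 0 < 4 * ε)] at hgrowth
    nlinarith [abs_sub (φ (p + (t * (4 * ε)) • e)) (φ p)]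
  calc μ S ≤ ENNReal.ofReal (2 * ‖(4 * ε) • e‖ / r) * μ (ball x (2 * r)) :=
        measure_le_of_forall_add_smul_mem μ hS hr inter_subset_right
          (smul_ne_zero (by positivity) he0) hline
    _ = ENNReal.ofReal (M.toNNReal * ε) := by
        have : 2 * ‖(4 * ε) • e‖ / r = 8 * ‖e‖ / r * ε := by
          rw [norm_smul, Real.norm_of_nonneg (by positivity)]; ring
        rw [this, ENNReal.ofReal_mul (by positivity), ENNReal.ofReal_mul (by positivity),
          ENNReal.ofReal_coe_nnreal, ENNReal.coe_toNNReal hM, mul_right_comm]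

theorem exists_mem_nhds_linearSublevelBound (hφ : ContDiff ℝ 1 φ) {x : E}
    (hx : φ x = 0 → fderiv ℝ φ x ≠ 0) : ∃ t ∈ 𝓝 x, LinearSublevelBound μ φ t := by
  by_cases h0 : φ x = 0
  · obtain ⟨r, hr, h⟩ := exists_ball_linearSublevelBound_of_fderiv_ne_zero μ hφ (hx h0)
    exact ⟨_, ball_mem_nhds x hr, h⟩
  · have hφx : 0 < |φ x| := abs_pos.2 h0
    refine ⟨ball x 1 ∩ {y | |φ x| / 2 ≤ |φ y|}, Filter.inter_mem (ball_mem_nhds x one_pos) ?_,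
      .of_le_abs ((measure_mono inter_subset_left).trans_lt measure_ball_lt_top).ne
        (half_pos hφx) fun y hy => hy.2⟩
    exact (continuous_abs.comp hφ.continuous).continuousAt.eventually
      (le_mem_nhds (half_lt_self hφx))

end LocalBounds

theorem stmt9_general (d : ℕ) (Ω : Set (EuclideanSpace ℝ (Fin d)))
    (hΩb : Bornology.IsBounded Ω)
    (φ : EuclideanSpace ℝ (Fin d) → ℝ) (hφ : ContDiff ℝ 1 φ)
    (hstruct : ∀ x ∈ closure Ω, φ x = 0 → fderiv ℝ φ x ≠ 0) :
    ∃ C : ℝ, 0 < C ∧ ∀ ε : ℝ, 0 < ε →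
      volume {x | x ∈ closure Ω ∧ |φ x| ≤ ε} ≤ ENNReal.ofReal (C * ε) := by
  obtain ⟨C, hC⟩ := hΩb.isCompact_closure.linearSublevelBound fun x hx =>
    exists_mem_nhds_linearSublevelBound volume hφ (hstruct x hx)
  refine ⟨C + 1, by positivity, fun ε hε => ?_⟩
  calc volume {x | x ∈ closure Ω ∧ |φ x| ≤ ε} = volume ({x | |φ x| ≤ ε} ∩ closure Ω) := by
        rw [inter_comm]; rfl
    _ ≤ ENNReal.ofReal (C * ε) := hC ε hε
    _ ≤ ENNReal.ofReal ((C + 1) * ε) := ENNReal.ofReal_le_ofReal (by gcongr; linarith)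

/-- If `Ω ⊂ ℝ^d` is open and bounded and `φ̄ ∈ C¹(ℝ^d)` satisfies
`∇φ̄ ≠ 0` on `{φ̄ = 0} ∩ cl(Ω)`, then there exists `C > 0` with
`λ^d({x ∈ cl(Ω) : |φ̄(x)| ≤ ε}) ≤ Cε` for all `ε > 0`. -/
theorem stmt9 (d : ℕ) (Ω : Set (EuclideanSpace ℝ (Fin d)))
    (hΩo : IsOpen Ω) (hΩb : Bornology.IsBounded Ω)
    (φ : EuclideanSpace ℝ (Fin d) → ℝ) (hφ : ContDiff ℝ 1 φ)
    (hstruct : ∀ x ∈ closure Ω, φ x = 0 → fderiv ℝ φ x ≠ 0) :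
    ∃ C : ℝ, 0 < C ∧ ∀ ε : ℝ, 0 < ε →
      volume {x | x ∈ closure Ω ∧ |φ x| ≤ ε} ≤ ENNReal.ofReal (C * ε) :=
  stmt9_general d Ω hΩb φ hφ hstruct
end

section
/- Let Ω ⊂ ℝ^d be open and bounded and let φ̄ ∈ C¹(ℝ^d) satisfy the structural assumption ∇φ̄(x) ≠ 0 for every x ∈ {φ̄ = 0} ∩ cl(Ω). Then there exists c > 0 such that for all v ∈ L^∞(Ω): ‖v‖_{L^∞(Ω)} · ∫_Ω |φ̄ v| dλ^d ≥ c · ‖v‖_{L¹(Ω)}². -/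
/-!
Near a point where `∇φ ≠ 0` some partial derivative `∂ᵢφ` is bounded below by `δ > 0` (after
possibly replacing `φ` by `-φ`), so every line parallel to `eᵢ` meets `{|φ| < ε}` in a set of
length at most `2ε/δ`, and Fubini bounds the measure of `{|φ| < ε}` in a small ball by `Cε`.
Near a point where `φ ≠ 0` this set is empty for small `ε`. Compactness of `cl Ω` patches these
local bounds into `λ(Ω ∩ {|φ| < ε}) ≤ Cε`. Splitting `Ω` along `{|φ| < ε}` then gives
`‖v‖₁ ≤ Cε ‖v‖_∞ + ε⁻¹ ∫ |φ v|`, and `ε = ‖v‖₁ / (2C ‖v‖_∞)` yields the claim with `c = 1/(4C)`.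
-/

open MeasureTheory Set Metric Filter Topology
open scoped ENNReal

lemma sq_le_four_mul_mul_of_forall_le_mul_add_div_s10 {N a b : ℝ} (hN : 0 ≤ N) (ha : 0 < a)
    (hb : 0 ≤ b) (h : ∀ ε > 0, N ≤ a * ε + b / ε) : N ^ 2 ≤ 4 * a * b := by
  rcases hN.eq_or_lt with rfl | hN
  · rw [zero_pow two_ne_zero]
    positivity
  have hopt := h (N / (2 * a)) (by positivity)
  have hval : a * (N / (2 * a)) + b / (N / (2 * a)) = N / 2 + 2 * a * b / N := by
    field_simp
  rw [hval, ← sub_le_iff_le_add', le_div_iff₀ hN] at hopt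
  nlinarith

lemma ENNReal.ofReal_mul_sq_le_of_forall_le_mul_add_div {N M I : ℝ≥0∞} {C : ℝ} (hC : 0 < C)
    (hM₀ : M ≠ 0) (hM : M ≠ ∞) (hI : I ≠ ∞)
    (h : ∀ ε > 0, N ≤ M * ENNReal.ofReal (C * ε) + I / ENNReal.ofReal ε) :
    ENNReal.ofReal (1 / (4 * C)) * N ^ 2 ≤ M * I := by
  have hN : N ≠ ∞ := ne_top_of_le_ne_top (by finiteness) (h 1 one_pos)
  rw [← ENNReal.ofReal_toReal hN, ← ENNReal.ofReal_toReal hM, ← ENNReal.ofReal_toReal hI] at h ⊢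
  have hMpos : 0 < M.toReal := ENNReal.toReal_pos hM₀ hM
  have hreal : ∀ ε > 0, N.toReal ≤ (M.toReal * C) * ε + I.toReal / ε := fun ε hε => by
    have := h ε hε
    rwa [← ENNReal.ofReal_mul hMpos.le, ← ENNReal.ofReal_div_of_pos hε,
      ← ENNReal.ofReal_add (by positivity) (by positivity),
      ENNReal.ofReal_le_ofReal_iff (by positivity), ← mul_assoc] at this
  have hsq := sq_le_four_mul_mul_of_forall_le_mul_add_div_s10 ENNReal.toReal_nonneg
    (by positivity) ENNReal.toReal_nonneg hreal
  rw [← ENNReal.ofReal_pow ENNReal.toReal_nonneg, ← ENNReal.ofReal_mul (by positivity),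
    ← ENNReal.ofReal_mul hMpos.le]
  refine ENNReal.ofReal_le_ofReal ?_
  calc 1 / (4 * C) * N.toReal ^ 2 ≤ 1 / (4 * C) * (4 * (M.toReal * C) * I.toReal) := by gcongr
    _ = M.toReal * I.toReal := by field_simp

section SublevelGrowth

variable {α : Type*} [MeasurableSpace α] {μ ν : Measure α} {f : α → ℝ}

def HasLinearSublevelGrowth (μ : Measure α) (f : α → ℝ) : Prop :=
  ∃ C > 0, ∀ ε > 0, μ {x | |f x| < ε} ≤ ENNReal.ofReal (C * ε)

namespace HasLinearSublevelGrowth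

lemma zero : HasLinearSublevelGrowth (0 : Measure α) f :=
  ⟨1, one_pos, fun _ _ => by simp⟩

lemma mono (h : HasLinearSublevelGrowth ν f) (hμν : μ ≤ ν) : HasLinearSublevelGrowth μ f := by
  obtain ⟨C, hC, h⟩ := h
  exact ⟨C, hC, fun ε hε => (hμν _).trans (h ε hε)⟩

lemma add (hμ : HasLinearSublevelGrowth μ f) (hν : HasLinearSublevelGrowth ν f) :
    HasLinearSublevelGrowth (μ + ν) f := by
  obtain ⟨C, hC, hμ⟩ := hμ
  obtain ⟨D, hD, hν⟩ := hν
  refine ⟨C + D, by positivity, fun ε hε => ?_⟩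
  rw [Measure.add_apply, add_mul, ENNReal.ofReal_add (by positivity) (by positivity)]
  exact add_le_add (hμ ε hε) (hν ε hε)

lemma restrict_of_le_abs {s : Set α} (hs : MeasurableSet s) (hμs : μ s ≠ ∞) {ε₀ : ℝ}
    (hε₀ : 0 < ε₀) (h : ∀ x ∈ s, ε₀ ≤ |f x|) : HasLinearSublevelGrowth (μ.restrict s) f := by
  refine ⟨(μ s).toReal / ε₀ + 1, by positivity, fun ε hε => ?_⟩
  rw [Measure.restrict_apply' hs]
  rcases le_or_gt ε ε₀ with hle | hlt
  · have hempty : {x | |f x| < ε} ∩ s = ∅ :=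
      eq_empty_of_forall_notMem fun x hx => (h x hx.2).not_gt (hx.1.trans_le hle)
    simp [hempty]
  · have hV : (μ s).toReal ≤ (μ s).toReal / ε₀ * ε := by
      rw [div_mul_eq_mul_div, le_div_iff₀ hε₀]
      gcongr
    calc μ ({x | |f x| < ε} ∩ s) ≤ μ s := measure_mono inter_subset_right
      _ = ENNReal.ofReal (μ s).toReal := (ENNReal.ofReal_toReal hμs).symm
      _ ≤ ENNReal.ofReal (((μ s).toReal / ε₀ + 1) * ε) := ENNReal.ofReal_le_ofReal (by nlinarith)

end HasLinearSublevelGrowth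

lemma eLpNorm_one_le_mul_measure_add_div (hf : Measurable f) {ε : ℝ} (hε : 0 < ε)
    (v : α → ℝ) :
    eLpNorm v 1 μ ≤ eLpNorm v ⊤ μ * μ {x | |f x| < ε}
      + (∫⁻ x, ENNReal.ofReal |f x * v x| ∂μ) / ENNReal.ofReal ε := by
  set A := {x | |f x| < ε}
  have hA : MeasurableSet A := measurableSet_lt hf.abs measurable_const
  have hnear : ∫⁻ x in A, ‖v x‖ₑ ∂μ ≤ eLpNorm v ⊤ μ * μ A :=
    calc ∫⁻ x in A, ‖v x‖ₑ ∂μ ≤ ∫⁻ _ in A, eLpNorm v ⊤ μ ∂μ := by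
          refine lintegral_mono_ae (ae_restrict_of_ae ?_)
          rw [eLpNorm_exponent_top]
          exact ae_le_eLpNormEssSup
      _ = eLpNorm v ⊤ μ * μ A := by rw [setLIntegral_const]
  have hfar : (∫⁻ x in Aᶜ, ‖v x‖ₑ ∂μ) * ENNReal.ofReal ε
      ≤ ∫⁻ x, ENNReal.ofReal |f x * v x| ∂μ :=
    calc (∫⁻ x in Aᶜ, ‖v x‖ₑ ∂μ) * ENNReal.ofReal ε
        = ∫⁻ x in Aᶜ, ‖v x‖ₑ * ENNReal.ofReal ε ∂μ :=
          (lintegral_mul_const' _ _ ENNReal.ofReal_ne_top).symm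
      _ ≤ ∫⁻ x in Aᶜ, ENNReal.ofReal |f x * v x| ∂μ := by
          refine setLIntegral_mono' hA.compl fun x hx => ?_
          rw [Real.enorm_eq_ofReal_abs, ← ENNReal.ofReal_mul (abs_nonneg _), abs_mul,
            mul_comm |f x|]
          exact ENNReal.ofReal_le_ofReal
            (mul_le_mul_of_nonneg_left (not_lt.1 hx) (abs_nonneg _))
      _ ≤ ∫⁻ x, ENNReal.ofReal |f x * v x| ∂μ := setLIntegral_le_lintegral _ _
  rw [eLpNorm_one_eq_lintegral_enorm, ← lintegral_add_compl _ hA]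
  exact add_le_add hnear ((ENNReal.le_div_iff_mul_le (Or.inl (by simpa using hε))
    (Or.inl ENNReal.ofReal_ne_top)).2 hfar)

theorem HasLinearSublevelGrowth.exists_ofReal_mul_sq_le (h : HasLinearSublevelGrowth μ f)
    (hf : Measurable f) :
    ∃ c : ℝ, 0 < c ∧ ∀ v : α → ℝ, MemLp v ⊤ μ →
      ENNReal.ofReal c * eLpNorm v 1 μ ^ 2
        ≤ eLpNorm v ⊤ μ * ∫⁻ x, ENNReal.ofReal |f x * v x| ∂μ := by
  obtain ⟨C, hC, hμ⟩ := h
  refine ⟨1 / (4 * C), by positivity, fun v hv => ?_⟩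
  -- Optimising in `ε` needs `0 < ‖v‖_∞` and `∫ |f v| < ∞`; otherwise `v =ᵐ 0` or the right
  -- side is `∞`.
  by_cases hM₀ : eLpNorm v ⊤ μ = 0
  · rw [eLpNorm_exponent_top, eLpNormEssSup_eq_zero_iff] at hM₀
    simp [eLpNorm_congr_ae hM₀]
  by_cases hI : ∫⁻ x, ENNReal.ofReal |f x * v x| ∂μ = ∞
  · rw [hI, ENNReal.mul_top hM₀]
    exact le_top
  refine ENNReal.ofReal_mul_sq_le_of_forall_le_mul_add_div hC hM₀ hv.2.ne hI fun ε hε => ?_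
  grw [eLpNorm_one_le_mul_measure_add_div hf hε v, hμ ε hε]

end SublevelGrowth

lemma ContinuousLinearMap.exists_apply_single_ne_zero {ι F : Type*} [Fintype ι] [DecidableEq ι]
    [NormedAddCommGroup F] [NormedSpace ℝ F] {L : EuclideanSpace ℝ ι →L[ℝ] F} (hL : L ≠ 0) :
    ∃ i, L (EuclideanSpace.single i 1) ≠ 0 := by
  contrapose! hL
  exact ContinuousLinearMap.coe_injective
    ((EuclideanSpace.basisFun ι ℝ).toBasis.ext (by simpa using hL))

lemma Real.volume_inter_abs_lt_le_of_le_deriv {D : Set ℝ} (hD : Convex ℝ D) {f : ℝ → ℝ}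
    (hf : Differentiable ℝ f) {δ : ℝ} (hδ : 0 < δ) (hf' : ∀ t ∈ D, δ ≤ deriv f t) (ε : ℝ) :
    volume (D ∩ {t | |f t| < ε}) ≤ ENNReal.ofReal (2 * ε / δ) := by
  have hgap : ∀ s ∈ D ∩ {t | |f t| < ε}, ∀ t ∈ D ∩ {t | |f t| < ε}, s ≤ t → t - s ≤ 2 * ε / δ := by
    rintro s ⟨hsD, hs : |f s| < ε⟩ t ⟨htD, ht : |f t| < ε⟩ hst
    have := hD.mul_sub_le_image_sub_of_le_deriv hf.continuous.continuousOn
      hf.differentiableOn (fun x hx => hf' x (interior_subset hx)) s hsD t htD hst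
    rw [le_div_iff₀ hδ]
    have := abs_lt.1 hs
    have := abs_lt.1 ht
    nlinarith
  refine (Real.volume_le_diam _).trans (Metric.ediam_le_of_forall_dist_le fun s hs t ht => ?_)
  rw [Real.dist_eq, abs_sub_le_iff]
  rcases le_total s t with hst | hst
  · have := hgap s hs t ht hst
    constructor <;> linarith
  · have := hgap t ht s hs hst
    constructor <;> linarith

lemma MeasureTheory.Measure.prod_apply_le_mul_of_slice_le {β γ : Type*} [MeasurableSpace β]
    [MeasurableSpace γ] {μ : Measure β} {ν : Measure γ} [SFinite μ] [SFinite ν]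
    {s : Set (β × γ)} (hs : MeasurableSet s) {B : Set γ} (hB : MeasurableSet B)
    (hsB : ∀ p ∈ s, p.2 ∈ B) {L : ℝ≥0∞} (hL : ∀ y ∈ B, μ {x | (x, y) ∈ s} ≤ L) :
    μ.prod ν s ≤ L * ν B := by
  rw [Measure.prod_apply_symm hs, ← lintegral_indicator_const hB]
  refine lintegral_mono fun y => ?_
  by_cases hy : y ∈ B
  · rw [indicator_of_mem hy]
    exact hL y hy
  · have hslice : (fun x => (x, y)) ⁻¹' s = ∅ :=
      eq_empty_of_forall_notMem fun x hx => hy (hsB _ hx)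
    simp [hslice]

def EuclideanSpace.splitAt {n : ℕ} (i : Fin (n + 1)) :
    EuclideanSpace ℝ (Fin (n + 1)) ≃ᵐ ℝ × (Fin n → ℝ) :=
  (MeasurableEquiv.toLp 2 (Fin (n + 1) → ℝ)).symm.trans
    (MeasurableEquiv.piFinSuccAbove (fun _ => ℝ) i)

namespace EuclideanSpace

variable {n : ℕ} (i : Fin (n + 1))

lemma measurePreserving_splitAt : MeasurePreserving (splitAt i) volume (volume.prod volume) :=
  (volume_preserving_piFinSuccAbove (fun _ => ℝ) i).comp
    (volume_preserving_symm_measurableEquiv_toLp (Fin (n + 1)))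

lemma splitAt_symm_apply (t : ℝ) (y : Fin n → ℝ) :
    (splitAt i).symm (t, y) = (splitAt i).symm (0, y) + t • single i 1 := by
  ext j
  rcases eq_or_ne j i with rfl | hj
  · simp [splitAt]
  · obtain ⟨k, rfl⟩ := Fin.exists_succAbove_eq hj
    simp [splitAt, hj]

lemma dist_splitAt_snd_le (x x' : EuclideanSpace ℝ (Fin (n + 1))) :
    dist (splitAt i x).2 (splitAt i x').2 ≤ dist x x' :=
  (dist_pi_le_iff dist_nonneg).2 fun _ => PiLp.dist_apply_le x x' _

end EuclideanSpace

open EuclideanSpace in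
theorem volume_closedBall_inter_abs_lt_le {n : ℕ} (i : Fin (n + 1))
    {g : EuclideanSpace ℝ (Fin (n + 1)) → ℝ} (hg : Differentiable ℝ g)
    {x₀ : EuclideanSpace ℝ (Fin (n + 1))} {R δ : ℝ} (hR : 0 ≤ R) (hδ : 0 < δ)
    (hgi : ∀ x ∈ closedBall x₀ R, δ ≤ fderiv ℝ g x (single i 1)) (ε : ℝ) :
    volume (closedBall x₀ R ∩ {x | |g x| < ε})
      ≤ ENNReal.ofReal (2 * ε / δ) * ENNReal.ofReal ((2 * R) ^ n) := by
  set T := splitAt i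
  set S := closedBall x₀ R ∩ {x | |g x| < ε}
  have hS : MeasurableSet S :=
    measurableSet_closedBall.inter (measurableSet_lt hg.continuous.measurable.abs measurable_const)
  have hline (y : Fin n → ℝ) :
      (fun t => T.symm (t, y))
        = AffineMap.lineMap (T.symm (0, y)) (T.symm (0, y) + single i 1) := by
    ext1 t
    rw [AffineMap.lineMap_apply, vsub_eq_sub, add_sub_cancel_left, vadd_eq_add]
    exact (splitAt_symm_apply i t y).trans (add_comm _ _)
  have hslice (y : Fin n → ℝ) :
      volume {t | (t, y) ∈ T.symm ⁻¹' S} ≤ ENNReal.ofReal (2 * ε / δ) := by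
    have hD : Convex ℝ ((fun t => T.symm (t, y)) ⁻¹' closedBall x₀ R) := by
      rw [hline y]
      exact (convex_closedBall x₀ R).affine_preimage _
    have hderiv (t : ℝ) : HasDerivAt (fun s => g (T.symm (s, y)))
        (fderiv ℝ g (T.symm (t, y)) (single i 1)) t := by
      refine (hg _).hasFDerivAt.comp_hasDerivAt t ?_
      rw [hline y]
      exact AffineMap.hasDerivAt_lineMap.congr_deriv (add_sub_cancel_left _ _)
    change volume (_ ∩ {t | |g (T.symm (t, y))| < ε}) ≤ _
    exact Real.volume_inter_abs_lt_le_of_le_deriv hD (fun t => (hderiv t).differentiableAt) hδ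
      (fun t ht => (hderiv t).deriv ▸ hgi _ ht) ε
  have hproj : ∀ p ∈ T.symm ⁻¹' S, p.2 ∈ closedBall (T x₀).2 R := fun p hp => by
    have := (dist_splitAt_snd_le i (T.symm p) x₀).trans hp.1
    rwa [MeasurableEquiv.apply_symm_apply] at this
  calc volume S = volume.prod volume (T.symm ⁻¹' S) :=
        ((measurePreserving_splitAt i).symm.measure_preimage hS.nullMeasurableSet).symm
    _ ≤ ENNReal.ofReal (2 * ε / δ) * volume (closedBall (T x₀).2 R) :=
        Measure.prod_apply_le_mul_of_slice_le (T.symm.measurable hS) measurableSet_closedBall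
          hproj fun y _ => hslice y
    _ = ENNReal.ofReal (2 * ε / δ) * ENNReal.ofReal ((2 * R) ^ n) := by
        rw [Real.volume_pi_closedBall _ hR]
        simp

theorem exists_hasLinearSublevelGrowth_restrict_ball {d : ℕ}
    {φ : EuclideanSpace ℝ (Fin d) → ℝ} (hφ : ContDiff ℝ 1 φ) {z : EuclideanSpace ℝ (Fin d)}
    (hz : fderiv ℝ φ z ≠ 0) :
    ∃ R > 0, HasLinearSublevelGrowth (volume.restrict (ball z R)) φ := by
  obtain ⟨i, hi⟩ := ContinuousLinearMap.exists_apply_single_ne_zero hz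
  obtain ⟨n, rfl⟩ : ∃ n, d = n + 1 := Nat.exists_eq_succ_of_ne_zero i.pos.ne'
  set e := EuclideanSpace.single i (1 : ℝ)
  obtain ⟨g, hg, hgφ, hgz⟩ : ∃ g : EuclideanSpace ℝ (Fin (n + 1)) → ℝ,
      ContDiff ℝ 1 g ∧ (∀ x, |g x| = |φ x|) ∧ 0 < fderiv ℝ g z e := by
    rcases hi.lt_or_gt with hneg | hpos
    · refine ⟨fun x => -φ x, hφ.neg, fun x => abs_neg _, ?_⟩
      simpa [fderiv_fun_neg] using hneg
    · exact ⟨φ, hφ, fun _ => rfl, hpos⟩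
  set δ := fderiv ℝ g z e / 2
  have hδ : 0 < δ := half_pos hgz
  have hnear : ∀ᶠ x in 𝓝 z, δ < fderiv ℝ g x e :=
    ((hg.continuous_fderiv one_ne_zero).clm_apply continuous_const).continuousAt.eventually
      (lt_mem_nhds (half_lt_self hgz))
  obtain ⟨R, hR, hball⟩ := nhds_basis_closedBall.eventually_iff.1 hnear
  refine ⟨R, hR, 2 / δ * (2 * R) ^ n, by positivity, fun ε hε => ?_⟩
  calc volume.restrict (ball z R) {x | |φ x| < ε}
      ≤ volume (closedBall z R ∩ {x | |g x| < ε}) := by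
        rw [Measure.restrict_apply' measurableSet_ball, inter_comm]
        exact measure_mono (inter_subset_inter ball_subset_closedBall fun x hx => by
          simpa [hgφ] using hx)
    _ ≤ ENNReal.ofReal (2 * ε / δ) * ENNReal.ofReal ((2 * R) ^ n) :=
        volume_closedBall_inter_abs_lt_le i (hg.differentiable one_ne_zero) hR.le hδ
          (fun x hx => (hball hx).le) ε
    _ = ENNReal.ofReal (2 / δ * (2 * R) ^ n * ε) := by
        rw [← ENNReal.ofReal_mul (by positivity)]
        ring_nf

theorem IsCompact.hasLinearSublevelGrowth_restrict {d : ℕ}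
    {K : Set (EuclideanSpace ℝ (Fin d))} (hK : IsCompact K) {φ : EuclideanSpace ℝ (Fin d) → ℝ}
    (hφ : ContDiff ℝ 1 φ) (hreg : ∀ x ∈ K, φ x = 0 → fderiv ℝ φ x ≠ 0) :
    HasLinearSublevelGrowth (volume.restrict K) φ := by
  refine hK.induction_on (p := fun s => HasLinearSublevelGrowth (volume.restrict s) φ)
    (by simpa using HasLinearSublevelGrowth.zero)
    (fun s t hst ht => ht.mono (Measure.restrict_mono hst le_rfl))
    (fun s t hs ht => (hs.add ht).mono (Measure.restrict_union_le s t)) fun x hx => ?_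
  by_cases hφx : φ x = 0
  · obtain ⟨R, hR, h⟩ := exists_hasLinearSublevelGrowth_restrict_ball hφ (hreg x hx hφx)
    exact ⟨ball x R, mem_nhdsWithin_of_mem_nhds (ball_mem_nhds x hR), h⟩
  · have hpos : 0 < |φ x| / 2 := half_pos (abs_pos.2 hφx)
    have hnear : ∀ᶠ y in 𝓝 x, |φ x| / 2 < |φ y| :=
      hφ.continuous.abs.continuousAt.eventually (lt_mem_nhds (half_lt_self (abs_pos.2 hφx)))
    obtain ⟨r, hr, hball⟩ := nhds_basis_ball.eventually_iff.1 hnear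
    exact ⟨ball x r, mem_nhdsWithin_of_mem_nhds (ball_mem_nhds x hr),
      .restrict_of_le_abs measurableSet_ball measure_ball_lt_top.ne hpos
        fun y hy => (hball hy).le⟩

theorem stmt10_general (d : ℕ) (Ω : Set (EuclideanSpace ℝ (Fin d)))
    (hΩb : Bornology.IsBounded Ω)
    (φ : EuclideanSpace ℝ (Fin d) → ℝ) (hφ : ContDiff ℝ 1 φ)
    (hstruct : ∀ x ∈ closure Ω, φ x = 0 → fderiv ℝ φ x ≠ 0) :
    ∃ c : ℝ, 0 < c ∧ ∀ v : EuclideanSpace ℝ (Fin d) → ℝ,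
      MemLp v ⊤ (volume.restrict Ω) →
      ENNReal.ofReal c * (eLpNorm v 1 (volume.restrict Ω)) ^ 2
        ≤ eLpNorm v ⊤ (volume.restrict Ω)
          * ∫⁻ x in Ω, ENNReal.ofReal |φ x * v x| := by
  have hgrowth : HasLinearSublevelGrowth (volume.restrict Ω) φ :=
    (hΩb.isCompact_closure.hasLinearSublevelGrowth_restrict hφ hstruct).mono
      (Measure.restrict_mono subset_closure le_rfl)
  exact hgrowth.exists_ofReal_mul_sq_le hφ.continuous.measurable

/-- If `Ω ⊂ ℝ^d` is open and bounded and `φ̄ ∈ C¹(ℝ^d)` satisfies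
`∇φ̄ ≠ 0` on `{φ̄ = 0} ∩ cl(Ω)`, then there exists `c > 0` such that for all
`v ∈ L^∞(Ω)`: `‖v‖_{L^∞(Ω)} ∫_Ω |φ̄ v| dλ^d ≥ c ‖v‖_{L¹(Ω)}²`. -/
theorem stmt10 (d : ℕ) (Ω : Set (EuclideanSpace ℝ (Fin d)))
    (hΩo : IsOpen Ω) (hΩb : Bornology.IsBounded Ω)
    (φ : EuclideanSpace ℝ (Fin d) → ℝ) (hφ : ContDiff ℝ 1 φ)
    (hstruct : ∀ x ∈ closure Ω, φ x = 0 → fderiv ℝ φ x ≠ 0) :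
    ∃ c : ℝ, 0 < c ∧ ∀ v : EuclideanSpace ℝ (Fin d) → ℝ,
      MemLp v ⊤ (volume.restrict Ω) →
      ENNReal.ofReal c * (eLpNorm v 1 (volume.restrict Ω)) ^ 2
        ≤ eLpNorm v ⊤ (volume.restrict Ω)
          * ∫⁻ x in Ω, ENNReal.ofReal |φ x * v x| :=
  stmt10_general d Ω hΩb φ hφ hstruct
end

section
/- Let Ω ⊂ ℝ^d be a Borel set with λ^d(Ω) < ∞, let φ̄ ∈ L¹(Ω), and let ū ∈ U_ad. If ∫_Ω φ̄ (u − ū) dλ^d ≥ 0 for all u ∈ U_ad, then for every u ∈ U_ad one has φ̄·(u − ū) ≥ 0 almost everywhere in Ω, and consequently ∫_Ω φ̄ (u − ū) dλ^d = ∫_Ω |φ̄ (u − ū)| dλ^d. -/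
/-!
Testing the first-order condition with the competitor that equals `u` on a measurable set `s`
and `ū` off it shows `∫_s φ̄ (u − ū) ≥ 0` for every measurable `s`; an integrable function with
nonnegative integral over every measurable set is nonnegative a.e.
-/

open MeasureTheory

lemma mul_piecewise_sub_eq_indicator {α : Type*} {φ u ubar : α → ℝ} (s : Set α)
    [DecidablePred (· ∈ s)] (x : α) :
    φ x * (s.piecewise u ubar x - ubar x) = s.indicator (fun x => φ x * (u x - ubar x)) x := by
  by_cases hx : x ∈ s <;> simp [hx]

section FirstOrderCondition

variable {α : Type*} [MeasurableSpace α] {μ : Measure α} {φ u ubar : α → ℝ}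

lemma integrable_mul_sub_of_abs_le_one (hφ : Integrable φ μ) (hu : AEStronglyMeasurable u μ)
    (hubar : AEStronglyMeasurable ubar μ) (hu1 : ∀ᵐ x ∂μ, |u x| ≤ 1)
    (hubar1 : ∀ᵐ x ∂μ, |ubar x| ≤ 1) :
    Integrable (fun x => φ x * (u x - ubar x)) μ := by
  refine hφ.mul_bdd (c := 2) (hu.sub hubar) ?_
  filter_upwards [hu1, hubar1] with x h₁ h₂
  rw [Real.norm_eq_abs]
  linarith [abs_sub (u x) (ubar x)]

lemma ae_nonneg_mul_sub_of_forall_integral_nonneg (hφ : Integrable φ μ)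
    (hu : AEStronglyMeasurable u μ) (hubar : AEStronglyMeasurable ubar μ)
    (hu1 : ∀ᵐ x ∂μ, |u x| ≤ 1) (hubar1 : ∀ᵐ x ∂μ, |ubar x| ≤ 1)
    (hFON : ∀ v : α → ℝ, AEStronglyMeasurable v μ → (∀ᵐ x ∂μ, |v x| ≤ 1) →
      0 ≤ ∫ x, φ x * (v x - ubar x) ∂μ) :
    ∀ᵐ x ∂μ, 0 ≤ φ x * (u x - ubar x) := by
  classical
  refine ae_nonneg_of_forall_setIntegral_nonneg
    (integrable_mul_sub_of_abs_le_one hφ hu hubar hu1 hubar1) fun s hs _ => ?_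
  have hv : AEStronglyMeasurable (s.piecewise u ubar) μ :=
    hu.restrict.piecewise hs hubar.restrict
  have hv1 : ∀ᵐ x ∂μ, |s.piecewise u ubar x| ≤ 1 := by
    filter_upwards [hu1, hubar1] with x h₁ h₂
    by_cases hx : x ∈ s <;> simp [hx, h₁, h₂]
  simpa only [mul_piecewise_sub_eq_indicator, integral_indicator hs] using hFON _ hv hv1

end FirstOrderCondition

theorem stmt12_general (d : ℕ) (Ω : Set (EuclideanSpace ℝ (Fin d)))
    (φ : EuclideanSpace ℝ (Fin d) → ℝ) (hφ : Integrable φ (volume.restrict Ω))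
    (ubar : EuclideanSpace ℝ (Fin d) → ℝ)
    (hubarmeas : AEStronglyMeasurable ubar (volume.restrict Ω))
    (hubar1 : ∀ᵐ x ∂(volume.restrict Ω), |ubar x| ≤ 1)
    (hFON : ∀ u : EuclideanSpace ℝ (Fin d) → ℝ,
      AEStronglyMeasurable u (volume.restrict Ω) →
      (∀ᵐ x ∂(volume.restrict Ω), |u x| ≤ 1) →
      0 ≤ ∫ x in Ω, φ x * (u x - ubar x)) :
    ∀ u : EuclideanSpace ℝ (Fin d) → ℝ,
      AEStronglyMeasurable u (volume.restrict Ω) →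
      (∀ᵐ x ∂(volume.restrict Ω), |u x| ≤ 1) →
      (∀ᵐ x ∂(volume.restrict Ω), 0 ≤ φ x * (u x - ubar x)) ∧
      ∫ x in Ω, φ x * (u x - ubar x) = ∫ x in Ω, |φ x * (u x - ubar x)| := by
  intro u hu hu1
  have hnonneg :=
    ae_nonneg_mul_sub_of_forall_integral_nonneg hφ hu hubarmeas hu1 hubar1 hFON
  refine ⟨hnonneg, integral_congr_ae ?_⟩
  filter_upwards [hnonneg] with x hx
  exact (abs_of_nonneg hx).symm

/-- If `ū ∈ U_ad` satisfies the first-order condition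
`∫_Ω φ̄ (u − ū) ≥ 0` for all `u ∈ U_ad`, then for every `u ∈ U_ad` we have
`φ̄·(u − ū) ≥ 0` a.e. in `Ω` and `∫_Ω φ̄ (u − ū) = ∫_Ω |φ̄ (u − ū)|`. -/
theorem stmt12 (d : ℕ) (Ω : Set (EuclideanSpace ℝ (Fin d))) (hΩ : MeasurableSet Ω)
    (hΩfin : volume Ω < ⊤)
    (φ : EuclideanSpace ℝ (Fin d) → ℝ) (hφ : Integrable φ (volume.restrict Ω))
    (ubar : EuclideanSpace ℝ (Fin d) → ℝ)
    (hubarmeas : AEStronglyMeasurable ubar (volume.restrict Ω))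
    (hubar1 : ∀ᵐ x ∂(volume.restrict Ω), |ubar x| ≤ 1)
    (hFON : ∀ u : EuclideanSpace ℝ (Fin d) → ℝ,
      AEStronglyMeasurable u (volume.restrict Ω) →
      (∀ᵐ x ∂(volume.restrict Ω), |u x| ≤ 1) →
      0 ≤ ∫ x in Ω, φ x * (u x - ubar x)) :
    ∀ u : EuclideanSpace ℝ (Fin d) → ℝ,
      AEStronglyMeasurable u (volume.restrict Ω) →
      (∀ᵐ x ∂(volume.restrict Ω), |u x| ≤ 1) →
      (∀ᵐ x ∂(volume.restrict Ω), 0 ≤ φ x * (u x - ubar x)) ∧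
      ∫ x in Ω, φ x * (u x - ubar x) = ∫ x in Ω, |φ x * (u x - ubar x)| :=
  stmt12_general d Ω φ hφ ubar hubarmeas hubar1 hFON
end
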